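/- arXiv:2008.03491 — 11 statements merged into one kernel-verified Lean document; each statement's English description precedes it below -/
import Mathlib

section
/- Assume there exist x₊, x₋ ∈ H with [Vx₊,Vx₊]_E > 0 and [Vx₋,Vx₋]_E < 0 (i.e. V^#V is indefinite). Then the following are equivalent: (1) for every x ∈ H with [Vx,Vx]_E = 0 one has [Tx,Tx]_K ≥ 0; (2) there exists ρ ∈ ℝ such that the bounded self-adjoint operator T^#T + ρ·V^#V on H is positive semidefinite. -/
/-!
Both forms `q = [T·,T·]_K` and `p = [V·,V·]_E` come from self-adjoint operators on `H`. For `x`, `y`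
with `p x > 0 > p y`, rotate `y` by a unit complex number so that the polar form of `q` vanishes at
`(x, y)`; on the real line `x + β y` the quadratic `p` then has a positive and a negative zero, and
the hypothesis `q ≥ 0` at both zeros yields `-q x / p x ≤ -q y / p y`. Hence
`ρ = sup {-q x / p x | p x > 0}` is finite and makes `q + ρ p` nonnegative everywhere.
-/

open scoped ComplexInnerProductSpace Pointwise

noncomputable section

variable {H K E : Type*}
  [NormedAddCommGroup H] [InnerProductSpace ℂ H] [CompleteSpace H]
  [NormedAddCommGroup K] [InnerProductSpace ℂ K] [CompleteSpace K]
  [NormedAddCommGroup E] [InnerProductSpace ℂ E] [CompleteSpace E]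

/-- The operator `T^#T + ρ·V^#V = T*∘J_K∘T + ρ·V*∘J_E∘V` on `H`. -/
def smOp (JK : K →L[ℂ] K) (JE : E →L[ℂ] E) (T : H →L[ℂ] K) (V : H →L[ℂ] E) (ρ : ℝ) :
    H →L[ℂ] H :=
  (ContinuousLinearMap.adjoint T) ∘L JK ∘L T +
    (ρ : ℂ) • ((ContinuousLinearMap.adjoint V) ∘L JE ∘L V)

/-- An operator on `H` is positive semidefinite if its quadratic form `⟨Ax,x⟩` is real
and nonnegative for every `x`. -/
def IsPosSemidef (A : H →L[ℂ] H) : Prop :=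
  ∀ x : H, (⟪A x, x⟫).im = 0 ∧ 0 ≤ (⟪A x, x⟫).re

/-- `sm(ρ,z₀)`: the set of global minimizers of
`F_ρ(x) = [Tx,Tx]_K + ρ·[Vx−z₀,Vx−z₀]_E` over `H`. -/
def smSet (JK : K →L[ℂ] K) (JE : E →L[ℂ] E) (T : H →L[ℂ] K) (V : H →L[ℂ] E) (ρ : ℝ)
    (z₀ : E) : Set H :=
  {xt : H | ∀ x : H,
    (⟪JK (T xt), T xt⟫).re + ρ * (⟪JE (V xt - z₀), V xt - z₀⟫).re ≤
      (⟪JK (T x), T x⟫).re + ρ * (⟪JE (V x - z₀), V x - z₀⟫).re}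

/-- `sp(w₀)`: the set of minimizers of `x ↦ [Tx,Tx]_K` subject to `Vx = w₀`. -/
def spSet (JK : K →L[ℂ] K) (T : H →L[ℂ] K) (V : H →L[ℂ] E) (w₀ : E) : Set H :=
  {xt : H | V xt = w₀ ∧ ∀ x : H, V x = w₀ →
    (⟪JK (T xt), T xt⟫).re ≤ (⟪JK (T x), T x⟫).re}

/-- `R(L)^[⊥]`: the `[·,·]_ρ`-orthogonal companion of the range of `L = (T,V)`. -/
def RLperp (JK : K →L[ℂ] K) (JE : E →L[ℂ] E) (T : H →L[ℂ] K) (V : H →L[ℂ] E) (ρ : ℝ) :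
    Set (K × E) :=
  {p : K × E | ∀ x : H, ⟪JK (T x), p.1⟫ + (ρ : ℂ) * ⟪JE (V x), p.2⟫ = 0}

/-- `N₀ = ker V ∩ ((T^#T)(ker V))^⊥`. -/
def N0 (JK : K →L[ℂ] K) (T : H →L[ℂ] K) (V : H →L[ℂ] E) : Submodule ℂ H :=
  LinearMap.ker (V : H →ₗ[ℂ] E) ⊓
    (Submodule.map (((ContinuousLinearMap.adjoint T) ∘L JK ∘L T : H →L[ℂ] H) : H →ₗ[ℂ] H)
      (LinearMap.ker (V : H →ₗ[ℂ] E)))ᗮ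

theorem Complex.exists_norm_eq_one_re_mul_eq_zero (a : ℂ) : ∃ u : ℂ, ‖u‖ = 1 ∧ (u * a).re = 0 := by
  refine ⟨I * exp (-(a.arg : ℂ) * I), ?_, ?_⟩
  · rw [norm_mul, norm_I, ← ofReal_neg, norm_exp_ofReal_mul_I, one_mul]
  · have : I * exp (-(a.arg : ℂ) * I) * a = I * ‖a‖ := by
      calc I * exp (-(a.arg : ℂ) * I) * a
          = I * exp (-(a.arg : ℂ) * I) * (‖a‖ * exp (a.arg * I)) := by
            rw [norm_mul_exp_arg_mul_I]
        _ = I * ‖a‖ * (exp (-(a.arg : ℂ) * I) * exp (a.arg * I)) := by ring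
        _ = I * ‖a‖ := by rw [← exp_add, neg_mul, neg_add_cancel, exp_zero, mul_one]
    rw [this]
    simp

theorem exists_neg_pos_roots_of_pos_of_neg {a b c : ℝ} (ha : 0 < a) (hc : c < 0) :
    ∃ β₁ β₂ : ℝ, β₂ < 0 ∧ 0 < β₁ ∧ c * β₁ ^ 2 + 2 * b * β₁ + a = 0 ∧
      c * β₂ ^ 2 + 2 * b * β₂ + a = 0 := by
  set s := √(b ^ 2 - a * c)
  have hs : s ^ 2 = b ^ 2 - a * c := Real.sq_sqrt (by nlinarith [sq_nonneg b])
  have hbs : |b| < s := abs_lt_of_sq_lt_sq (by nlinarith) (Real.sqrt_nonneg _)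
  have hroot : ∀ t, t ^ 2 = s ^ 2 → c * ((-b + t) / c) ^ 2 + 2 * b * ((-b + t) / c) + a = 0 := by
    intro t ht
    field_simp [hc.ne]
    linear_combination ht + hs
  refine ⟨(-b + -s) / c, (-b + s) / c, div_neg_of_pos_of_neg ?_ hc,
    div_pos_of_neg_of_neg ?_ hc, hroot _ (neg_sq s), hroot _ rfl⟩
  · linarith [le_abs_self b]
  · linarith [neg_abs_le b]

namespace LinearMap.IsSymmetric

variable {F : Type*} [NormedAddCommGroup F] [InnerProductSpace ℂ F] {A : F →ₗ[ℂ] F}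

theorem re_inner_map_add_smul (hA : A.IsSymmetric) (x y : F) (c : ℂ) :
    (⟪A (x + c • y), x + c • y⟫).re
      = (⟪A x, x⟫).re + 2 * (c * ⟪A x, y⟫).re + ‖c‖ ^ 2 * (⟪A y, y⟫).re := by
  have hyx : ⟪A y, x⟫ = (starRingEnd ℂ) ⟪A x, y⟫ := (hA.conj_inner_sym x y).symm
  simp only [map_add, map_smul, inner_add_left, inner_add_right, inner_smul_left,
    inner_smul_right, hyx, Complex.add_re, Complex.mul_re, Complex.conj_re, Complex.conj_im,
    Complex.sq_norm, Complex.normSq_apply, Complex.add_im, Complex.mul_im]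
  ring

theorem inner_map_self_eq_zero_iff_re (hA : A.IsSymmetric) (x : F) :
    ⟪A x, x⟫ = 0 ↔ (⟪A x, x⟫).re = 0 :=
  ⟨fun h ↦ by rw [h, Complex.zero_re], fun h ↦ Complex.ext h (hA.im_inner_apply_self x)⟩

theorem re_inner_cross_nonneg {B : F →ₗ[ℂ] F} (hA : A.IsSymmetric) (hB : B.IsSymmetric)
    (hnull : ∀ z, ⟪B z, z⟫ = 0 → 0 ≤ (⟪A z, z⟫).re) {x y : F}
    (hx : 0 < (⟪B x, x⟫).re) (hy : (⟪B y, y⟫).re < 0) :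
    0 ≤ (⟪A x, x⟫).re * -(⟪B y, y⟫).re + (⟪A y, y⟫).re * (⟪B x, x⟫).re := by
  obtain ⟨u, hu, hux⟩ := Complex.exists_norm_eq_one_re_mul_eq_zero ⟪A x, y⟫
  set r := (u * ⟪B x, y⟫).re
  have hexpand : ∀ {C : F →ₗ[ℂ] F}, C.IsSymmetric → ∀ β : ℝ,
      (⟪C (x + ((β : ℂ) * u) • y), x + ((β : ℂ) * u) • y⟫).re
        = (⟪C x, x⟫).re + 2 * β * (u * ⟪C x, y⟫).re + β ^ 2 * (⟪C y, y⟫).re := by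
    intro C hC β
    rw [hC.re_inner_map_add_smul, norm_mul, hu, Complex.norm_real, Real.norm_eq_abs, mul_one,
      sq_abs, mul_assoc, Complex.re_ofReal_mul]
    ring
  have hroot : ∀ β : ℝ, (⟪B y, y⟫).re * β ^ 2 + 2 * r * β + (⟪B x, x⟫).re = 0 →
      0 ≤ (⟪A x, x⟫).re * -(⟪B y, y⟫).re + (⟪A y, y⟫).re * (⟪B x, x⟫).re
        + 2 * r * β * (⟪A y, y⟫).re := by
    intro β hβ
    have hz := hnull (x + ((β : ℂ) * u) • y)
      ((hB.inner_map_self_eq_zero_iff_re _).2 (by rw [hexpand hB]; linarith))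
    rw [hexpand hA, hux] at hz
    simp only [mul_zero, add_zero] at hz
    linear_combination mul_nonneg hz (neg_nonneg.2 hy.le) - (⟪A y, y⟫).re * hβ
  obtain ⟨β₁, β₂, hβ₂, hβ₁, h₁, h₂⟩ := exists_neg_pos_roots_of_pos_of_neg (b := r) hx hy
  -- Weighting the inequalities at a positive and a negative root of the `B`-quadratic
  -- eliminates the cross term `r`.
  refine nonneg_of_mul_nonneg_right (a := β₁ - β₂) ?_ (by linarith)
  nlinarith [mul_nonneg hβ₁.le (hroot β₂ h₂), mul_nonneg (neg_nonneg.2 hβ₂.le) (hroot β₁ h₁)]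

end LinearMap.IsSymmetric

theorem exists_add_mul_nonneg_of_cross_nonneg {ι : Type*} {q p : ι → ℝ}
    (hzero : ∀ i, p i = 0 → 0 ≤ q i)
    (hcross : ∀ i j, 0 < p i → p j < 0 → 0 ≤ q i * -p j + q j * p i)
    (hpos : ∃ i, 0 < p i) (hneg : ∃ j, p j < 0) :
    ∃ ρ : ℝ, ∀ i, 0 ≤ q i + ρ * p i := by
  have hle : ∀ i j, 0 < p i → p j < 0 → -q i / p i ≤ -q j / p j := by
    intro i j hi hj
    rw [← neg_div_neg_eq (-q j), neg_neg, div_le_div_iff₀ hi (neg_pos.2 hj)]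
    linarith [hcross i j hi hj]
  set S := (fun i ↦ -q i / p i) '' {i | 0 < p i}
  obtain ⟨i₀, hi₀⟩ := hpos
  obtain ⟨j₀, hj₀⟩ := hneg
  have hS : S.Nonempty := ⟨_, i₀, hi₀, rfl⟩
  have hSbdd : BddAbove S := ⟨-q j₀ / p j₀, by rintro _ ⟨i, hi, rfl⟩; exact hle i j₀ hi hj₀⟩
  refine ⟨sSup S, fun i ↦ ?_⟩
  rcases lt_trichotomy (p i) 0 with hi | hi | hi
  · have := (le_div_iff_of_neg hi).1 (csSup_le hS (by rintro _ ⟨k, hk, rfl⟩; exact hle k i hk hi))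
    linarith
  · simpa [hi] using hzero i hi
  · have := (div_le_iff₀ hi).1 (le_csSup hSbdd ⟨i, hi, rfl⟩)
    linarith

theorem LinearMap.IsSymmetric.nonneg_on_isotropic_iff_exists_add_mul_nonneg
    {F : Type*} [NormedAddCommGroup F] [InnerProductSpace ℂ F] {A B : F →ₗ[ℂ] F}
    (hA : A.IsSymmetric) (hB : B.IsSymmetric)
    (hpos : ∃ x, 0 < (⟪B x, x⟫).re) (hneg : ∃ x, (⟪B x, x⟫).re < 0) :
    (∀ x, ⟪B x, x⟫ = 0 → 0 ≤ (⟪A x, x⟫).re) ↔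
      ∃ ρ : ℝ, ∀ x, 0 ≤ (⟪A x, x⟫).re + ρ * (⟪B x, x⟫).re := by
  refine ⟨fun hnull ↦ exists_add_mul_nonneg_of_cross_nonneg ?_
    (fun x y ↦ hA.re_inner_cross_nonneg hB hnull) hpos hneg, ?_⟩
  · exact fun x hx ↦ hnull x ((hB.inner_map_self_eq_zero_iff_re x).2 hx)
  · rintro ⟨ρ, hρ⟩ x hx
    simpa [hx] using hρ x

theorem ContinuousLinearMap.inner_adjoint_comp_comp_apply_self {F : Type*}
    [NormedAddCommGroup F] [InnerProductSpace ℂ F] [CompleteSpace F]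
    (J : F →L[ℂ] F) (S : H →L[ℂ] F) (x : H) :
    ⟪(adjoint S ∘L J ∘L S) x, x⟫ = ⟪J (S x), S x⟫ := by
  rw [comp_apply, adjoint_inner_left, comp_apply]

theorem isPosSemidef_smOp_iff {JK : K →L[ℂ] K} {JE : E →L[ℂ] E} (hJK : IsSelfAdjoint JK)
    (hJE : IsSelfAdjoint JE) (T : H →L[ℂ] K) (V : H →L[ℂ] E) (ρ : ℝ) :
    IsPosSemidef (smOp JK JE T V ρ) ↔
      ∀ x, 0 ≤ (⟪JK (T x), T x⟫).re + ρ * (⟪JE (V x), V x⟫).re := by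
  have hinner : ∀ x, ⟪smOp JK JE T V ρ x, x⟫ = ⟪JK (T x), T x⟫ + ρ * ⟪JE (V x), V x⟫ := by
    intro x
    simp [smOp, ContinuousLinearMap.adjoint_inner_left]
  have hK : ∀ y, (⟪JK y, y⟫).im = 0 := hJK.isSymmetric.im_inner_apply_self
  have hE : ∀ y, (⟪JE y, y⟫).im = 0 := hJE.isSymmetric.im_inner_apply_self
  simp [IsPosSemidef, hinner, hK, hE]

theorem stmt0_general
    (JK : K →L[ℂ] K) (hJKsa : IsSelfAdjoint JK)
    (JE : E →L[ℂ] E) (hJEsa : IsSelfAdjoint JE)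
    (T : H →L[ℂ] K) (V : H →L[ℂ] E)
    (hplus : ∃ xp : H, 0 < (⟪JE (V xp), V xp⟫).re)
    (hminus : ∃ xm : H, (⟪JE (V xm), V xm⟫).re < 0) :
    (∀ x : H, ⟪JE (V x), V x⟫ = 0 → 0 ≤ (⟪JK (T x), T x⟫).re) ↔
      ∃ ρ : ℝ, IsPosSemidef (smOp JK JE T V ρ) := by
  have key := LinearMap.IsSymmetric.nonneg_on_isotropic_iff_exists_add_mul_nonneg
    (hJKsa.adjoint_conj T).isSymmetric (hJEsa.adjoint_conj V).isSymmetric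
  simp only [ContinuousLinearMap.coe_coe,
    ContinuousLinearMap.inner_adjoint_comp_comp_apply_self] at key
  simp only [isPosSemidef_smOp_iff hJKsa hJEsa]
  exact key hplus hminus

theorem stmt0
    (JK : K →L[ℂ] K) (hJKsa : IsSelfAdjoint JK) (hJK2 : JK ∘L JK = 1)
    (JE : E →L[ℂ] E) (hJEsa : IsSelfAdjoint JE) (hJE2 : JE ∘L JE = 1)
    (T : H →L[ℂ] K) (V : H →L[ℂ] E)
    (hT : Function.Surjective T) (hV : Function.Surjective V)
    (hplus : ∃ xp : H, 0 < (⟪JE (V xp), V xp⟫).re)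
    (hminus : ∃ xm : H, (⟪JE (V xm), V xm⟫).re < 0) :
    (∀ x : H, ⟪JE (V x), V x⟫ = 0 → 0 ≤ (⟪JK (T x), T x⟫).re) ↔
      ∃ ρ : ℝ, IsPosSemidef (smOp JK JE T V ρ) :=
  stmt0_general JK hJKsa JE hJEsa T V hplus hminus
end
end

section
/- Assume there exist x₊, x₋ ∈ H with [Vx₊,Vx₊]_E > 0 and [Vx₋,Vx₋]_E < 0, and that [Tx,Tx]_K ≥ 0 for every x ∈ H with [Vx,Vx]_E = 0. Define ρ₋ := −inf{ [Tx,Tx]_K / [Vx,Vx]_E : x ∈ H, [Vx,Vx]_E > 0 } and ρ₊ := −sup{ [Tx,Tx]_K / [Vx,Vx]_E : x ∈ H, [Vx,Vx]_E < 0 } (these infimum and supremum exist as real numbers under the hypotheses, and ρ₋ ≤ ρ₊). Then for any ρ ∈ ℝ with ρ ≠ 0 the following are equivalent: (1) T^#T + ρ·V^#V is positive semidefinite on H; (2) ρ₋ ≤ ρ ≤ ρ₊; (3) [Tx,Tx]_K + ρ·[Vx,Vx]_E ≥ 0 for every x ∈ H (i.e. the range of L is nonnegative for [·,·]_ρ).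 -/
open scoped ComplexInnerProductSpace Pointwise

noncomputable section

variable {H K E : Type*}
  [NormedAddCommGroup H] [InnerProductSpace ℂ H] [CompleteSpace H]
  [NormedAddCommGroup K] [InnerProductSpace ℂ K] [CompleteSpace K]
  [NormedAddCommGroup E] [InnerProductSpace ℂ E] [CompleteSpace E]

/-- The set of ratios `[Tx,Tx]_K / [Vx,Vx]_E` over `x` with `[Vx,Vx]_E > 0`. -/
def posRatios (JK : K →L[ℂ] K) (JE : E →L[ℂ] E) (T : H →L[ℂ] K) (V : H →L[ℂ] E) : Set ℝ :=
  {t : ℝ | ∃ x : H, 0 < (⟪JE (V x), V x⟫).re ∧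
    t = (⟪JK (T x), T x⟫).re / (⟪JE (V x), V x⟫).re}

/-- The set of ratios `[Tx,Tx]_K / [Vx,Vx]_E` over `x` with `[Vx,Vx]_E < 0`. -/
def negRatios (JK : K →L[ℂ] K) (JE : E →L[ℂ] E) (T : H →L[ℂ] K) (V : H →L[ℂ] E) : Set ℝ :=
  {t : ℝ | ∃ x : H, (⟪JE (V x), V x⟫).re < 0 ∧
    t = (⟪JK (T x), T x⟫).re / (⟪JE (V x), V x⟫).re}

/-!
For `[Vx,Vx] = a > 0 > b = [Vy,Vy]` choose `l ∈ ℂ` with `|l|² = a / (-b)` and phase chosen so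
that the real cross term vanishes: then `x + l y` and `x - l y` are both `V`-neutral, and adding
the two inequalities `[T(x ± l y), T(x ± l y)] ≥ 0` cancels the `T`-cross terms, leaving
`[Ty,Ty] / b ≤ [Tx,Tx] / a`. So every ratio of negative type lies below every ratio of positive
type. Splitting `[Tx,Tx] + ρ [Vx,Vx] ≥ 0` by the sign of `[Vx,Vx]` turns it into
`-ρ ≤ inf` of the positive ratios and `sup` of the negative ratios `≤ -ρ`. Finally
`⟨(T^#T + ρ V^#V) x, x⟩ = [Tx,Tx] + ρ [Vx,Vx]` is real, which gives (1) ⟺ (3).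
-/

theorem Complex.exists_normSq_eq_and_re_mul_eq_zero {r : ℝ} (hr : 0 ≤ r) (c : ℂ) :
    ∃ l : ℂ, Complex.normSq l = r ∧ (l * c).re = 0 := by
  obtain rfl | hc := eq_or_ne c 0
  · exact ⟨Real.sqrt r, by simp [Complex.normSq_ofReal, Real.mul_self_sqrt hr], by simp⟩
  · refine ⟨Real.sqrt r * Complex.I * ‖c‖ / c, ?_, ?_⟩
    · have : ‖c‖ ≠ 0 := norm_ne_zero_iff.mpr hc
      simp [Complex.normSq_eq_norm_sq, mul_pow, Real.sq_sqrt hr, this]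
    · field_simp
      simp

section InnerForms
variable {F : Type*} [NormedAddCommGroup F] [InnerProductSpace ℂ F]

theorem re_inner_map_add_smul (J : F →ₗ[ℂ] F) (u v : F) (l : ℂ) :
    (⟪J (u + l • v), u + l • v⟫).re = (⟪J u, u⟫).re + Complex.normSq l * (⟪J v, v⟫).re +
      (l * (⟪J u, v⟫ + starRingEnd ℂ ⟪J v, u⟫)).re := by
  simp only [map_add, map_smul, inner_add_left, inner_add_right, inner_smul_left,
    inner_smul_right, Complex.add_re, Complex.mul_re, Complex.add_im, Complex.mul_im,
    Complex.conj_re, Complex.conj_im, Complex.normSq_apply]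
  ring

variable {G G' : Type*} [NormedAddCommGroup G] [InnerProductSpace ℂ G]
  [NormedAddCommGroup G'] [InnerProductSpace ℂ G']

theorem neg_ratio_le_pos_ratio (JK : G →ₗ[ℂ] G) (JE : G' →ₗ[ℂ] G') (T : F →ₗ[ℂ] G)
    (V : F →ₗ[ℂ] G') (hnull : ∀ x, (⟪JE (V x), V x⟫).re = 0 → 0 ≤ (⟪JK (T x), T x⟫).re)
    {x y : F} (hx : 0 < (⟪JE (V x), V x⟫).re) (hy : (⟪JE (V y), V y⟫).re < 0) :
    (⟪JK (T y), T y⟫).re / (⟪JE (V y), V y⟫).re ≤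
      (⟪JK (T x), T x⟫).re / (⟪JE (V x), V x⟫).re := by
  generalize ha : (⟪JE (V x), V x⟫).re = a at hx
  generalize hb : (⟪JE (V y), V y⟫).re = b at hy
  have hb' : 0 < -b := neg_pos.mpr hy
  obtain ⟨l, hl, hlE⟩ := Complex.exists_normSq_eq_and_re_mul_eq_zero (div_nonneg hx.le hb'.le)
    (⟪JE (V x), V y⟫ + starRingEnd ℂ ⟪JE (V y), V x⟫)
  have hnull_nonneg (m : ℂ) (hm : Complex.normSq m = a / -b)
      (hmE : (m * (⟪JE (V x), V y⟫ + starRingEnd ℂ ⟪JE (V y), V x⟫)).re = 0) :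
      0 ≤ (⟪JK (T x), T x⟫).re + a / -b * (⟪JK (T y), T y⟫).re +
        (m * (⟪JK (T x), T y⟫ + starRingEnd ℂ ⟪JK (T y), T x⟫)).re := by
    have h := hnull (x + m • y) (by
      rw [map_add, map_smul, re_inner_map_add_smul, hm, hmE, ha, hb]
      field_simp [hy.ne]
      ring)
    rwa [map_add, map_smul, re_inner_map_add_smul, hm] at h
  have hplus := hnull_nonneg l hl hlE
  have hminus := hnull_nonneg (-l) (by rwa [Complex.normSq_neg])
    (by rw [neg_mul, Complex.neg_re, hlE, neg_zero])
  rw [neg_mul, Complex.neg_re] at hminus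
  have hdiv : 0 ≤ ((⟪JK (T x), T x⟫).re + a / -b * (⟪JK (T y), T y⟫).re) / a :=
    div_nonneg (by linarith) hx.le
  have hexpand : ((⟪JK (T x), T x⟫).re + a / -b * (⟪JK (T y), T y⟫).re) / a =
      (⟪JK (T x), T x⟫).re / a - (⟪JK (T y), T y⟫).re / b := by
    field_simp
    ring
  linarith

end InnerForms

section Ratios
variable {X : Type*} {f g : X → ℝ}

theorem ratios_nonempty_bdd_and_neg_sInf_le_neg_sSup (hpos : ∃ x, 0 < g x)
    (hneg : ∃ x, g x < 0) (hle : ∀ x y, 0 < g x → g y < 0 → f y / g y ≤ f x / g x) :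
    {t | ∃ x, 0 < g x ∧ t = f x / g x}.Nonempty ∧ BddBelow {t | ∃ x, 0 < g x ∧ t = f x / g x} ∧
      {t | ∃ x, g x < 0 ∧ t = f x / g x}.Nonempty ∧
      BddAbove {t | ∃ x, g x < 0 ∧ t = f x / g x} ∧
      -sInf {t | ∃ x, 0 < g x ∧ t = f x / g x} ≤ -sSup {t | ∃ x, g x < 0 ∧ t = f x / g x} := by
  obtain ⟨xp, hxp⟩ := hpos
  obtain ⟨xm, hxm⟩ := hneg
  have hle' : ∀ s ∈ {t | ∃ x, g x < 0 ∧ t = f x / g x},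
      ∀ t ∈ {t | ∃ x, 0 < g x ∧ t = f x / g x}, s ≤ t := by
    rintro _ ⟨y, hy, rfl⟩ _ ⟨x, hx, rfl⟩
    exact hle x y hx hy
  have hPne : {t | ∃ x, 0 < g x ∧ t = f x / g x}.Nonempty := ⟨_, xp, hxp, rfl⟩
  have hNne : {t | ∃ x, g x < 0 ∧ t = f x / g x}.Nonempty := ⟨_, xm, hxm, rfl⟩
  exact ⟨hPne, ⟨_, hle' _ ⟨xm, hxm, rfl⟩⟩, hNne, ⟨_, fun s hs => hle' s hs _ ⟨xp, hxp, rfl⟩⟩,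
    neg_le_neg (csSup_le hNne fun s hs => le_csInf hPne (hle' s hs))⟩

theorem neg_sInf_le_and_le_neg_sSup_iff (hnull : ∀ x, g x = 0 → 0 ≤ f x)
    (hPne : {t | ∃ x, 0 < g x ∧ t = f x / g x}.Nonempty)
    (hPbdd : BddBelow {t | ∃ x, 0 < g x ∧ t = f x / g x})
    (hNne : {t | ∃ x, g x < 0 ∧ t = f x / g x}.Nonempty)
    (hNbdd : BddAbove {t | ∃ x, g x < 0 ∧ t = f x / g x}) (ρ : ℝ) :
    (-sInf {t | ∃ x, 0 < g x ∧ t = f x / g x} ≤ ρ ∧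
        ρ ≤ -sSup {t | ∃ x, g x < 0 ∧ t = f x / g x}) ↔
      ∀ x, 0 ≤ f x + ρ * g x := by
  rw [neg_le, le_csInf_iff hPbdd hPne, le_neg, csSup_le_iff hNbdd hNne]
  simp only [Set.mem_ofPred_eq, forall_exists_index, and_imp]
  constructor
  · rintro ⟨hP, hN⟩ x
    rcases lt_trichotomy (g x) 0 with hgx | hgx | hgx
    · have := (div_le_iff_of_neg hgx).1 (hN _ x hgx rfl)
      linarith
    · simpa [hgx] using hnull x hgx
    · have := (le_div_iff₀ hgx).1 (hP _ x hgx rfl)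
      linarith
  · intro h
    refine ⟨fun t x hgx ht => ?_, fun t x hgx ht => ?_⟩ <;> subst ht
    · exact (le_div_iff₀ hgx).2 (by linarith [h x])
    · exact (div_le_iff_of_neg hgx).2 (by linarith [h x])

end Ratios

section Krein

theorem re_inner_smOp_apply_self (JK : K →L[ℂ] K) (JE : E →L[ℂ] E) (T : H →L[ℂ] K)
    (V : H →L[ℂ] E) (ρ : ℝ) (x : H) :
    (⟪smOp JK JE T V ρ x, x⟫).re = (⟪JK (T x), T x⟫).re + ρ * (⟪JE (V x), V x⟫).re := by
  simp [smOp, ContinuousLinearMap.adjoint_inner_left]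

theorem isSelfAdjoint_smOp {JK : K →L[ℂ] K} {JE : E →L[ℂ] E} (hJK : IsSelfAdjoint JK)
    (hJE : IsSelfAdjoint JE) (T : H →L[ℂ] K) (V : H →L[ℂ] E) (ρ : ℝ) :
    IsSelfAdjoint (smOp JK JE T V ρ) :=
  (hJK.adjoint_conj T).add <|
    IsSelfAdjoint.smul (R := ℂ) (Complex.conj_ofReal ρ) (hJE.adjoint_conj V)

theorem isPosSemidef_iff_forall_re_nonneg {A : H →L[ℂ] H} (hA : IsSelfAdjoint A) :
    IsPosSemidef A ↔ ∀ x, 0 ≤ (⟪A x, x⟫).re := by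
  have him (x : H) : (⟪A x, x⟫).im = 0 := hA.isSymmetric.im_inner_apply_self x
  simp [IsPosSemidef, him]

end Krein

theorem stmt1_general
    (JK : K →L[ℂ] K) (hJKsa : IsSelfAdjoint JK)
    (JE : E →L[ℂ] E) (hJEsa : IsSelfAdjoint JE)
    (T : H →L[ℂ] K) (V : H →L[ℂ] E)
    (hplus : ∃ xp : H, 0 < (⟪JE (V xp), V xp⟫).re)
    (hminus : ∃ xm : H, (⟪JE (V xm), V xm⟫).re < 0)
    (hcone : ∀ x : H, ⟪JE (V x), V x⟫ = 0 → 0 ≤ (⟪JK (T x), T x⟫).re)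
    (ρ : ℝ) :
    ((posRatios JK JE T V).Nonempty ∧ BddBelow (posRatios JK JE T V) ∧
      (negRatios JK JE T V).Nonempty ∧ BddAbove (negRatios JK JE T V) ∧
      -sInf (posRatios JK JE T V) ≤ -sSup (negRatios JK JE T V)) ∧
    (IsPosSemidef (smOp JK JE T V ρ) ↔
      (-sInf (posRatios JK JE T V) ≤ ρ ∧ ρ ≤ -sSup (negRatios JK JE T V))) ∧
    ((-sInf (posRatios JK JE T V) ≤ ρ ∧ ρ ≤ -sSup (negRatios JK JE T V)) ↔
      (∀ x : H, 0 ≤ (⟪JK (T x), T x⟫).re + ρ * (⟪JE (V x), V x⟫).re)) := by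
  have hnull (x : H) (hx : (⟪JE (V x), V x⟫).re = 0) : 0 ≤ (⟪JK (T x), T x⟫).re :=
    hcone x (Complex.ext hx (hJEsa.isSymmetric.im_inner_apply_self (V x)))
  have bounds := ratios_nonempty_bdd_and_neg_sInf_le_neg_sSup
    (f := fun x => (⟪JK (T x), T x⟫).re) hplus hminus
    fun x y hx hy => neg_ratio_le_pos_ratio (JK : K →ₗ[ℂ] K) (JE : E →ₗ[ℂ] E)
      (T : H →ₗ[ℂ] K) (V : H →ₗ[ℂ] E) hnull hx hy
  obtain ⟨hPne, hPbdd, hNne, hNbdd, -⟩ := id bounds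
  have hrange := neg_sInf_le_and_le_neg_sSup_iff hnull hPne hPbdd hNne hNbdd ρ
  exact ⟨bounds, (isPosSemidef_smOp_iff hJKsa hJEsa T V ρ).trans hrange.symm, hrange⟩

theorem stmt1
    (JK : K →L[ℂ] K) (hJKsa : IsSelfAdjoint JK) (hJK2 : JK ∘L JK = 1)
    (JE : E →L[ℂ] E) (hJEsa : IsSelfAdjoint JE) (hJE2 : JE ∘L JE = 1)
    (T : H →L[ℂ] K) (V : H →L[ℂ] E)
    (hT : Function.Surjective T) (hV : Function.Surjective V)
    (hplus : ∃ xp : H, 0 < (⟪JE (V xp), V xp⟫).re)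
    (hminus : ∃ xm : H, (⟪JE (V xm), V xm⟫).re < 0)
    (hcone : ∀ x : H, ⟪JE (V x), V x⟫ = 0 → 0 ≤ (⟪JK (T x), T x⟫).re)
    (ρ : ℝ) (hρ : ρ ≠ 0) :
    ((posRatios JK JE T V).Nonempty ∧ BddBelow (posRatios JK JE T V) ∧
      (negRatios JK JE T V).Nonempty ∧ BddAbove (negRatios JK JE T V) ∧
      -sInf (posRatios JK JE T V) ≤ -sSup (negRatios JK JE T V)) ∧
    (IsPosSemidef (smOp JK JE T V ρ) ↔
      (-sInf (posRatios JK JE T V) ≤ ρ ∧ ρ ≤ -sSup (negRatios JK JE T V))) ∧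
    ((-sInf (posRatios JK JE T V) ≤ ρ ∧ ρ ≤ -sSup (negRatios JK JE T V)) ↔
      (∀ x : H, 0 ≤ (⟪JK (T x), T x⟫).re + ρ * (⟪JE (V x), V x⟫).re)) :=
  stmt1_general JK hJKsa JE hJEsa T V hplus hminus hcone ρ
end
end

section
/- Let ρ ∈ ℝ, ρ ≠ 0, and z₀ ∈ E, and assume that the function F_ρ(x) = [Tx,Tx]_K + ρ·[Vx−z₀,Vx−z₀]_E attains a global minimum on H. Then x̃ ∈ H is a global minimizer of F_ρ if and only if (T^#T + ρ·V^#V)x̃ = ρ·V^#z₀. Moreover, if x̃ is a global minimizer, then the set of global minimizers of F_ρ equals the affine set x̃ + ker(T^#T + ρ·V^#V). -/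
/-! Expanding `F_ρ` around any point gives
`F_ρ(x + h) = F_ρ(x) + Re⟨A h, h⟩ + 2 Re⟨A x - b, h⟩` with `A = T^#T + ρ V^#V` and
`b = ρ V^# z₀`. At a minimizer the quadratic form of `A` must be nonnegative and the linear
term must vanish in every direction, so `A x = b`; conversely, once the form is known to be
nonnegative (which the existence of one minimizer guarantees), every solution of `A x = b` is a
minimizer. The solution set of `A x = b` is an affine translate of `ker A`. -/

open scoped ComplexInnerProductSpace Pointwise

noncomputable section

variable {H K E : Type*}
  [NormedAddCommGroup H] [InnerProductSpace ℂ H] [CompleteSpace H]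
  [NormedAddCommGroup K] [InnerProductSpace ℂ K] [CompleteSpace K]
  [NormedAddCommGroup E] [InnerProductSpace ℂ E] [CompleteSpace E]

open scoped InnerProductSpace
open ContinuousLinearMap

theorem eq_zero_of_forall_sq_mul_add_nonneg {q g : ℝ} (h : ∀ t : ℝ, 0 ≤ t ^ 2 * q + 2 * t * g) :
    g = 0 := by
  have hc : 0 < |q| + 1 := by positivity
  have ht := h (-g / (|q| + 1))
  have key : (-g / (|q| + 1)) ^ 2 * q + 2 * (-g / (|q| + 1)) * g
      = g ^ 2 * (q - 2 * |q| - 2) / (|q| + 1) ^ 2 := by field_simp; ring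
  rw [key, div_nonneg_iff] at ht
  have hnum : 0 ≤ g ^ 2 * (q - 2 * |q| - 2) := by
    rcases ht with ⟨hnum, _⟩ | ⟨_, hden⟩
    · exact hnum
    · nlinarith [sq_nonneg (|q| + 1)]
  nlinarith [le_abs_self q, abs_nonneg q, sq_nonneg g]

section QuadraticExpansion

variable {𝕜 X : Type*} [RCLike 𝕜] [NormedAddCommGroup X] [InnerProductSpace 𝕜 X]

/-- `f` is the quadratic functional `x ↦ Re⟨A x, x⟩ - 2 Re⟨b, x⟩ + const`, recorded through its
expansion around every point. -/
def HasQuadraticExpansion (f : X → ℝ) (A : X →L[𝕜] X) (b : X) : Prop :=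
  ∀ x h, f (x + h) = f x + RCLike.re ⟪A h, h⟫_𝕜 + 2 * RCLike.re ⟪A x - b, h⟫_𝕜

namespace HasQuadraticExpansion

variable {f g : X → ℝ} {A B : X →L[𝕜] X} {b c : X}

theorem add (hf : HasQuadraticExpansion f A b) (hg : HasQuadraticExpansion g B c) :
    HasQuadraticExpansion (fun x => f x + g x) (A + B) (b + c) := by
  intro x h
  dsimp only
  have hsub : (A + B) x - (b + c) = (A x - b) + (B x - c) := by
    rw [add_apply]; abel
  rw [hf, hg, hsub, add_apply, inner_add_left, inner_add_left, map_add, map_add]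
  ring

theorem const_mul (hf : HasQuadraticExpansion f A b) (r : ℝ) :
    HasQuadraticExpansion (fun x => r * f x) ((r : 𝕜) • A) ((r : 𝕜) • b) := by
  intro x h
  dsimp only
  rw [hf, smul_apply, smul_apply, ← smul_sub, inner_smul_left, inner_smul_left,
    RCLike.conj_ofReal, RCLike.re_ofReal_mul, RCLike.re_ofReal_mul]
  ring

theorem sq_mul_add_nonneg (hf : HasQuadraticExpansion f A b) {x : X} (hx : ∀ y, f x ≤ f y)
    (v : X) (t : ℝ) :
    0 ≤ t ^ 2 * RCLike.re ⟪A v, v⟫_𝕜 + 2 * t * RCLike.re ⟪A x - b, v⟫_𝕜 := by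
  have hxt := hx (x + (t : 𝕜) • v)
  rw [hf, map_smul, inner_smul_left, inner_smul_right, inner_smul_right, RCLike.conj_ofReal,
    ← mul_assoc, ← RCLike.ofReal_mul, RCLike.re_ofReal_mul, RCLike.re_ofReal_mul] at hxt
  nlinarith

theorem apply_eq_of_isMin (hf : HasQuadraticExpansion f A b) {x : X} (hx : ∀ y, f x ≤ f y) :
    A x = b := by
  have hzero := eq_zero_of_forall_sq_mul_add_nonneg (hf.sq_mul_add_nonneg hx (A x - b))
  exact sub_eq_zero.mp (re_inner_self_nonpos.mp hzero.le)

theorem re_inner_self_nonneg_of_isMin (hf : HasQuadraticExpansion f A b) {x : X}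
    (hx : ∀ y, f x ≤ f y) (v : X) : 0 ≤ RCLike.re ⟪A v, v⟫_𝕜 := by
  have hlin := eq_zero_of_forall_sq_mul_add_nonneg (hf.sq_mul_add_nonneg hx v)
  simpa [hlin] using hf.sq_mul_add_nonneg hx v 1

theorem isMin_iff (hf : HasQuadraticExpansion f A b) (hmin : ∃ x₀, ∀ y, f x₀ ≤ f y) (x : X) :
    (∀ y, f x ≤ f y) ↔ A x = b := by
  refine ⟨hf.apply_eq_of_isMin, fun hx y => ?_⟩
  obtain ⟨x₀, hx₀⟩ := hmin
  have hy := hf x (y - x)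
  rw [add_sub_cancel, hx, sub_self, inner_zero_left, map_zero] at hy
  linarith [hf.re_inner_self_nonneg_of_isMin hx₀ (y - x)]

end HasQuadraticExpansion

end QuadraticExpansion

theorem LinearMap.setOf_apply_eq_eq_image_add_ker {R M N : Type*} [Ring R] [AddCommGroup M]
    [Module R M] [AddCommGroup N] [Module R N] (A : M →ₗ[R] N) {x₀ : M} {b : N}
    (hx₀ : A x₀ = b) : {x | A x = b} = (fun n => x₀ + n) '' (LinearMap.ker A : Set M) := by
  ext x
  refine ⟨fun hx => ⟨x - x₀, ?_, add_sub_cancel x₀ x⟩, ?_⟩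
  · rw [SetLike.mem_coe, LinearMap.mem_ker, map_sub, Set.mem_ofPred.mp hx, hx₀, sub_self]
  · rintro ⟨n, hn, rfl⟩
    rw [Set.mem_ofPred, map_add, hx₀, LinearMap.mem_ker.mp hn, add_zero]

section SelfAdjointForm

variable {𝕜 X Y : Type*} [RCLike 𝕜] [NormedAddCommGroup X] [InnerProductSpace 𝕜 X]
  [CompleteSpace X] [NormedAddCommGroup Y] [InnerProductSpace 𝕜 Y] [CompleteSpace Y]
  {J : Y →L[𝕜] Y}

theorem IsSelfAdjoint.re_inner_map_add_add (hJ : IsSelfAdjoint J) (u v : Y) :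
    RCLike.re ⟪J (u + v), u + v⟫_𝕜 =
      RCLike.re ⟪J u, u⟫_𝕜 + RCLike.re ⟪J v, v⟫_𝕜 + 2 * RCLike.re ⟪J u, v⟫_𝕜 := by
  have hsymm : RCLike.re ⟪J v, u⟫_𝕜 = RCLike.re ⟪J u, v⟫_𝕜 := by
    rw [show ⟪J v, u⟫_𝕜 = ⟪v, J u⟫_𝕜 from hJ.isSymmetric v u, inner_re_symm]
  rw [map_add, inner_add_left, inner_add_right, inner_add_right, map_add, map_add, map_add,
    hsymm]
  ring

theorem IsSelfAdjoint.hasQuadraticExpansion_re_inner_map_sub (hJ : IsSelfAdjoint J)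
    (S : X →L[𝕜] Y) (z : Y) :
    HasQuadraticExpansion (fun x => RCLike.re ⟪J (S x - z), S x - z⟫_𝕜)
      (adjoint S ∘L J ∘L S) (adjoint S (J z)) := by
  intro x h
  dsimp only
  have hshift : S (x + h) - z = (S x - z) + S h := by rw [map_add]; abel
  simp only [comp_apply]
  rw [hshift, hJ.re_inner_map_add_add, adjoint_inner_left, ← map_sub, ← map_sub,
    adjoint_inner_left]

end SelfAdjointForm

theorem hasQuadraticExpansion_smSet_objective {JK : K →L[ℂ] K} (hJK : IsSelfAdjoint JK)
    {JE : E →L[ℂ] E} (hJE : IsSelfAdjoint JE)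
    (T : H →L[ℂ] K) (V : H →L[ℂ] E) (ρ : ℝ) (z₀ : E) :
    HasQuadraticExpansion
      (fun x => (⟪JK (T x), T x⟫).re + ρ * (⟪JE (V x - z₀), V x - z₀⟫).re)
      (smOp JK JE T V ρ) ((ρ : ℂ) • adjoint V (JE z₀)) := by
  have hTform := hJK.hasQuadraticExpansion_re_inner_map_sub T 0
  simp only [sub_zero, map_zero] at hTform
  have hsum := hTform.add ((hJE.hasQuadraticExpansion_re_inner_map_sub V z₀).const_mul ρ)
  rwa [zero_add] at hsum

theorem stmt3_general
    (JK : K →L[ℂ] K) (hJKsa : IsSelfAdjoint JK)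
    (JE : E →L[ℂ] E) (hJEsa : IsSelfAdjoint JE)
    (T : H →L[ℂ] K) (V : H →L[ℂ] E)
    (ρ : ℝ) (z₀ : E)
    (hmin : (smSet JK JE T V ρ z₀).Nonempty) :
    (∀ xt : H, xt ∈ smSet JK JE T V ρ z₀ ↔
        smOp JK JE T V ρ xt = (ρ : ℂ) • (ContinuousLinearMap.adjoint V) (JE z₀)) ∧
    (∀ xt ∈ smSet JK JE T V ρ z₀,
      smSet JK JE T V ρ z₀ =
        (fun n => xt + n) '' ((LinearMap.ker (smOp JK JE T V ρ : H →ₗ[ℂ] H) : Set H))) := by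
  have hF := hasQuadraticExpansion_smSet_objective hJKsa hJEsa T V ρ z₀
  have hsm : smSet JK JE T V ρ z₀ =
      {x | smOp JK JE T V ρ x = (ρ : ℂ) • adjoint V (JE z₀)} :=
    Set.ext (hF.isMin_iff hmin)
  refine ⟨fun xt => hF.isMin_iff hmin xt, fun xt hxt => ?_⟩
  rw [hsm] at hxt ⊢
  exact (smOp JK JE T V ρ : H →ₗ[ℂ] H).setOf_apply_eq_eq_image_add_ker hxt

theorem stmt3
    (JK : K →L[ℂ] K) (hJKsa : IsSelfAdjoint JK) (hJK2 : JK ∘L JK = 1)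
    (JE : E →L[ℂ] E) (hJEsa : IsSelfAdjoint JE) (hJE2 : JE ∘L JE = 1)
    (T : H →L[ℂ] K) (V : H →L[ℂ] E)
    (hT : Function.Surjective T) (hV : Function.Surjective V)
    (ρ : ℝ) (hρ : ρ ≠ 0) (z₀ : E)
    (hmin : (smSet JK JE T V ρ z₀).Nonempty) :
    (∀ xt : H, xt ∈ smSet JK JE T V ρ z₀ ↔
        smOp JK JE T V ρ xt = (ρ : ℂ) • (ContinuousLinearMap.adjoint V) (JE z₀)) ∧
    (∀ xt ∈ smSet JK JE T V ρ z₀,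
      smSet JK JE T V ρ z₀ =
        (fun n => xt + n) '' ((LinearMap.ker (smOp JK JE T V ρ : H →ₗ[ℂ] H) : Set H))) :=
  stmt3_general JK hJKsa JE hJEsa T V ρ z₀ hmin
end
end

section
/- Let H, K, E be complex Hilbert spaces and let T : H → K and V : H → E be bounded surjective linear operators. Define L : H → K×E by Lx = (Tx,Vx). Then the following are equivalent: (1) the range of L is a closed subspace of the product Hilbert space K×E; (2) T(ker V) is a closed subspace of K; (3) ker T + ker V is a closed subspace of H. -/
/-!
By the open mapping theorem a surjective bounded operator between Banach spaces is a quotient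
map, so a set is closed iff its preimage is. Now `ker T + ker V = T⁻¹(T(ker V))`, and under the
surjection `Ψ(k, x) = (k + Tx, Vx)` from `K × H` onto `K × E` the range of `L` pulls back to
`T(ker V) × H`, the preimage of `T(ker V)` under the projection to `K`.
-/

open scoped ComplexInnerProductSpace Pointwise

noncomputable section

variable {H K E : Type*}
  [NormedAddCommGroup H] [InnerProductSpace ℂ H] [CompleteSpace H]
  [NormedAddCommGroup K] [InnerProductSpace ℂ K] [CompleteSpace K]
  [NormedAddCommGroup E] [InnerProductSpace ℂ E] [CompleteSpace E]

namespace LinearMap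

variable {R M N P : Type*} [Ring R] [AddCommGroup M] [Module R M] [AddCommGroup N] [Module R N]
  [AddCommGroup P] [Module R P]

theorem preimage_image_eq_ker_add (f : M →ₗ[R] N) (p : Submodule R M) :
    f ⁻¹' (f '' p) = (ker f : Set M) + p := by
  rw [← Submodule.map_coe, ← Submodule.comap_coe, Submodule.comap_map_eq, Submodule.coe_sup,
    add_comm]

theorem add_mem_range_prod_iff (f : M →ₗ[R] N) (g : M →ₗ[R] P) (k : N) (x : M) :
    (k + f x, g x) ∈ Set.range (fun y => (f y, g y)) ↔ k ∈ f '' (ker g : Set M) := by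
  constructor
  · rintro ⟨y, hy⟩
    obtain ⟨hfy, hgy⟩ := Prod.mk.inj hy
    exact ⟨y - x, by simp [hgy], by simp [hfy]⟩
  · rintro ⟨n, hn, rfl⟩
    exact ⟨n + x, by simp [mem_ker.mp hn]⟩

end LinearMap

namespace ContinuousLinearMap

variable {𝕜 F G : Type*} [NontriviallyNormedField 𝕜]
  [NormedAddCommGroup F] [NormedSpace 𝕜 F] [CompleteSpace F]
  [NormedAddCommGroup G] [NormedSpace 𝕜 G] [CompleteSpace G]

theorem isClosed_preimage_iff_of_surjective {f : F →L[𝕜] G} (hf : Function.Surjective f)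
    {s : Set G} : IsClosed (f ⁻¹' s) ↔ IsClosed s :=
  (f.isQuotientMap hf).isCoinducing.isClosed_preimage

end ContinuousLinearMap

open ContinuousLinearMap in
theorem stmt5
    (T : H →L[ℂ] K) (V : H →L[ℂ] E)
    (hT : Function.Surjective T) (hV : Function.Surjective V) :
    (IsClosed (Set.range (fun x : H => (T x, V x))) ↔
        IsClosed (T '' (LinearMap.ker (V : H →ₗ[ℂ] E) : Set H))) ∧
    (IsClosed (T '' (LinearMap.ker (V : H →ₗ[ℂ] E) : Set H)) ↔
        IsClosed ((LinearMap.ker (T : H →ₗ[ℂ] K) : Set H) + (LinearMap.ker (V : H →ₗ[ℂ] E) : Set H))) := by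
  set Ψ : K × H →L[ℂ] K × E := (fst ℂ K H + T ∘L snd ℂ K H).prod (V ∘L snd ℂ K H)
  have hΨ : Function.Surjective Ψ := by
    rintro ⟨k, e⟩
    obtain ⟨x, rfl⟩ := hV e
    exact ⟨(k - T x, x), by simp [Ψ]⟩
  have hΨ_preimage : Ψ ⁻¹' Set.range (fun x : H => (T x, V x)) =
      fst ℂ K H ⁻¹' (T '' (LinearMap.ker (V : H →ₗ[ℂ] E) : Set H)) := by
    ext ⟨k, x⟩
    exact LinearMap.add_mem_range_prod_iff (T : H →ₗ[ℂ] K) (V : H →ₗ[ℂ] E) k x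
  constructor
  · rw [← isClosed_preimage_iff_of_surjective hΨ, hΨ_preimage,
      isClosed_preimage_iff_of_surjective Prod.fst_surjective]
  · rw [← isClosed_preimage_iff_of_surjective hT, ← LinearMap.preimage_image_eq_ker_add,
      coe_coe]
end
end

section
/- Let ρ ∈ ℝ, ρ ≠ 0. Assume T^#T + ρ·V^#V is positive semidefinite on H and that ker T + ker V is a closed subspace of H. Then the following are equivalent: (1) for every z₀ ∈ E with [z₀, Vx]_E = 0 for all x ∈ ker(T^#T + ρ·V^#V), the function F_ρ(x) = [Tx,Tx]_K + ρ·[Vx−z₀,Vx−z₀]_E attains a global minimum on H; (2) R(L) + R(L)^[⊥] is a closed subspace of K×E (i.e. R(L) is pseudo-regular); (3) the range of T^#T + ρ·V^#V is closed in H. -/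
/-!
Write `L = (T, V)` and `L^#` for its Krein adjoint with respect to `[·,·]_ρ`, so that
`A := T^#T + ρ V^#V = L^# L` and `R(L)^[⊥] = ker L^#`. Since `ker T + ker V` is closed and `T`, `V`
are surjective, the open mapping theorem makes `R(L)` closed; by the closed range theorem
`R(L^#) = R(T*) + R(V*) = (ker T ∩ ker V)^⊥` is closed as well. Now `R(L) + ker L^#` is the preimage
of `R(A)` under `L^#` and `R(A)` is its image, and an operator with closed range maps closed
subspaces containing its kernel to closed subspaces: this is (2) ⇔ (3).

Up to a constant, `F_ρ` is the quadratic functional `⟪A x, x⟫ - 2 Re ⟪w, x⟫` of the positive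
operator `A` with `w = L^#(0, z₀)`, so it attains its minimum iff `w ∈ R(A)`, while the condition
on `z₀` says `w ∈ (ker A)^⊥ = closure R(A)`. Since `T` is surjective every vector of
`R(L^#) ⊇ (ker A)^⊥` is `A x + L^#(0, z)`, so (1) says exactly that `closure R(A) ⊆ R(A)`.
-/

open scoped ComplexInnerProductSpace Pointwise

noncomputable section

variable {H K E : Type*}
  [NormedAddCommGroup H] [InnerProductSpace ℂ H] [CompleteSpace H]
  [NormedAddCommGroup K] [InnerProductSpace ℂ K] [CompleteSpace K]
  [NormedAddCommGroup E] [InnerProductSpace ℂ E] [CompleteSpace E]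

open ContinuousLinearMap RCLike
open scoped InnerProductSpace

section Banach

variable {𝕜 X Y Z W : Type*} [NontriviallyNormedField 𝕜]
  [NormedAddCommGroup X] [NormedSpace 𝕜 X] [CompleteSpace X]
  [NormedAddCommGroup Y] [NormedSpace 𝕜 Y] [CompleteSpace Y]
  [NormedAddCommGroup W] [NormedSpace 𝕜 W] [CompleteSpace W]

namespace ContinuousLinearMap

theorem isClosed_map_of_surjective_of_ker_le {f : X →L[𝕜] Y}
    (hf : Function.Surjective f) {N : Submodule 𝕜 X} (hN : IsClosed (N : Set X))
    (hker : f.ker ≤ N) : IsClosed (N.map (f : X →ₗ[𝕜] Y) : Set Y) := by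
  have hsat : (N.map (f : X →ₗ[𝕜] Y)).comap (f : X →ₗ[𝕜] Y) = N := by
    rw [Submodule.comap_map_eq, sup_eq_left.2 hker]
  rw [← ((f.isOpenMap hf).isQuotientMap f.continuous hf).isClosed_preimage]
  rwa [← hsat] at hN

theorem isClosed_map_of_ker_le {f : X →L[𝕜] Y}
    (hf : IsClosed (f.range : Set Y)) {N : Submodule 𝕜 X} (hN : IsClosed (N : Set X))
    (hker : f.ker ≤ N) : IsClosed (N.map (f : X →ₗ[𝕜] Y) : Set Y) := by
  have : CompleteSpace f.range := hf.completeSpace_coe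
  have hg := f.rangeRestrict.isClosed_map_of_surjective_of_ker_le
    (LinearMap.surjective_rangeRestrict _) hN (by simpa using hker)
  have := hf.isClosedEmbedding_subtypeVal.isClosedMap _ hg
  rwa [Submodule.map_coe, Set.image_image] at this

theorem isClosed_range_sup_ker_iff [AddCommGroup Z] [Module 𝕜 Z] {D : X →L[𝕜] Y}
    (hD : IsClosed (D.range : Set Y)) (L : Z →ₗ[𝕜] X) :
    IsClosed ((L.range ⊔ D.ker : Submodule 𝕜 X) : Set X) ↔
      IsClosed ((D.toLinearMap ∘ₗ L).range : Set Y) := by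
  rw [LinearMap.range_comp, ← Submodule.comap_map_eq]
  refine ⟨fun h ↦ ?_, fun h ↦ h.preimage D.continuous⟩
  have := D.isClosed_map_of_ker_le hD h (LinearMap.ker_le_comap _)
  rwa [Submodule.map_comap_eq, inf_eq_right.2 LinearMap.map_le_range] at this

theorem isClosed_range_prod {T : X →L[𝕜] Y} {V : X →L[𝕜] W}
    (hT : Function.Surjective T) (hV : Function.Surjective V)
    (hker : IsClosed ((T.ker ⊔ V.ker : Submodule 𝕜 X) : Set X)) :
    IsClosed ((T.prod V).range : Set (Y × W)) := by
  set M := T.ker.map (V : X →ₗ[𝕜] W)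
  have hM : IsClosed (M : Set W) := by
    have := V.isClosed_map_of_surjective_of_ker_le hV hker le_sup_right
    rwa [Submodule.map_sup, LinearMap.le_ker_iff_map.1 le_rfl, sup_bot_eq] at this
  set Ψ : X × W →L[𝕜] Y × W := (T ∘L fst 𝕜 X W).prod (V ∘L fst 𝕜 X W + snd 𝕜 X W)
  have hΨ : Function.Surjective Ψ := by
    rintro ⟨y, z⟩
    obtain ⟨x, rfl⟩ := hT y
    exact ⟨(x, z - V x), by simp [Ψ]⟩
  have hrange : (T.prod V).range = (Submodule.prod ⊤ M).map (Ψ : X × W →ₗ[𝕜] Y × W) := by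
    apply le_antisymm
    · rintro _ ⟨x, rfl⟩
      exact ⟨(x, 0), ⟨trivial, zero_mem M⟩, by simp [Ψ]⟩
    · rintro _ ⟨⟨x, _⟩, ⟨-, k, hk, rfl⟩, rfl⟩
      exact ⟨x + k, by simpa [Ψ] using hk⟩
  rw [hrange]
  refine Ψ.isClosed_map_of_surjective_of_ker_le hΨ ?_ ?_
  · simpa [Submodule.prod_coe] using isClosed_univ.prod hM
  · rintro ⟨x, e⟩ h
    simp only [LinearMap.mem_ker, coe_coe, Ψ, prod_apply, comp_apply, coe_fst', add_apply,
      coe_snd', Prod.mk_eq_zero] at h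
    refine ⟨trivial, -x, by simpa using h.1, ?_⟩
    simpa [neg_eq_iff_eq_neg, eq_neg_iff_add_eq_zero, add_comm] using h.2

end ContinuousLinearMap

end Banach

section Hilbert

variable {𝕜 X Y Z : Type*} [RCLike 𝕜]
  [NormedAddCommGroup X] [InnerProductSpace 𝕜 X]
  [NormedAddCommGroup Y] [InnerProductSpace 𝕜 Y]
  [NormedAddCommGroup Z] [InnerProductSpace 𝕜 Z]

namespace ContinuousLinearMap

theorem IsPositive.forall_quadratic_le_iff {A : X →L[𝕜] X} (hA : A.IsPositive) (w x : X) :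
    (∀ y, re ⟪A x, x⟫_𝕜 - 2 * re ⟪w, x⟫_𝕜 ≤ re ⟪A y, y⟫_𝕜 - 2 * re ⟪w, y⟫_𝕜) ↔ A x = w := by
  set q : X → ℝ := fun y ↦ re ⟪A y, y⟫_𝕜 - 2 * re ⟪w, y⟫_𝕜
  have hq : ∀ v, q (x + v) = q x + re ⟪A v, v⟫_𝕜 + 2 * re ⟪A x - w, v⟫_𝕜 := by
    intro v
    have : re ⟪A v, x⟫_𝕜 = re ⟪A x, v⟫_𝕜 := by
      rw [hA.inner_left_eq_inner_right, inner_re_symm]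
    simp only [q, map_add, inner_add_left, inner_add_right, inner_sub_left, map_sub, this]
    ring
  change (∀ y, q x ≤ q y) ↔ _
  refine ⟨fun hmin ↦ ?_, fun hx y ↦ ?_⟩
  · set r := A x - w
    -- `t ↦ q (x + t r) - q x` is a nonnegative real quadratic with linear coefficient `2 ‖r‖²`
    have : discrim (re ⟪A r, r⟫_𝕜) (2 * ‖r‖ ^ 2) 0 ≤ 0 := by
      refine discrim_le_zero fun t ↦ ?_
      have := hq ((t : 𝕜) • r)
      simp only [map_smul, inner_smul_right, inner_smul_left, conj_ofReal, mul_re, ofReal_re,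
        ofReal_im, zero_mul, sub_zero, mul_im, add_zero, inner_self_eq_norm_sq_to_K,
        re_ofReal_pow, im_ofReal_pow, mul_zero] at this
      linarith [hmin (x + (t : 𝕜) • r)]
    rw [discrim, mul_zero, sub_zero] at this
    rw [← sub_eq_zero, ← norm_eq_zero]
    simpa using le_antisymm this (sq_nonneg _)
  · have := hq (y - x)
    rw [hx, sub_self, inner_zero_left, map_zero, mul_zero, add_zero, add_sub_cancel] at this
    linarith [hA.re_inner_nonneg_left (y - x)]

variable [CompleteSpace X] [CompleteSpace Y] [CompleteSpace Z]

theorem _root_.IsSelfAdjoint.inner_left_eq_inner_right {A : X →L[𝕜] X} (hA : IsSelfAdjoint A)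
    (x y : X) : ⟪A x, y⟫_𝕜 = ⟪x, A y⟫_𝕜 :=
  hA.isSymmetric x y

theorem range_adjoint_le_orthogonal_ker (S : X →L[𝕜] Y) : (adjoint S).range ≤ S.kerᗮ :=
  S.orthogonal_ker ▸ Submodule.le_topologicalClosure _

theorem isClosed_range_adjoint_of_surjective {S : X →L[𝕜] Y} (hS : Function.Surjective S) :
    IsClosed ((adjoint S).range : Set X) := by
  obtain ⟨C, hC, hpre⟩ := S.exists_preimage_norm_le hS
  have hbound : ∀ y, ‖y‖ ≤ C * ‖adjoint S y‖ := by
    intro y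
    obtain ⟨x, rfl, hx⟩ := hpre y
    have key : ‖S x‖ * ‖S x‖ ≤ ‖S x‖ * (C * ‖adjoint S (S x)‖) :=
      calc ‖S x‖ * ‖S x‖ = re ⟪adjoint S (S x), x⟫_𝕜 := by
            rw [adjoint_inner_left, inner_self_eq_norm_mul_norm]
        _ ≤ ‖adjoint S (S x)‖ * ‖x‖ := re_inner_le_norm _ _
        _ ≤ ‖adjoint S (S x)‖ * (C * ‖S x‖) := by gcongr
        _ = ‖S x‖ * (C * ‖adjoint S (S x)‖) := by ring
    rcases (norm_nonneg (S x)).eq_or_lt with h | h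
    · rw [← h]; positivity
    · exact le_of_mul_le_mul_left key h
  rw [LinearMap.coe_range]
  exact ((adjoint S).antilipschitz_of_bound (K := ⟨C, hC.le⟩) hbound).isClosed_range
    (adjoint S).uniformContinuous

theorem range_adjoint_of_surjective {S : X →L[𝕜] Y} (hS : Function.Surjective S) :
    (adjoint S).range = S.kerᗮ := by
  rw [S.orthogonal_ker, (isClosed_range_adjoint_of_surjective hS).submodule_topologicalClosure_eq]

theorem range_adjoint_of_isClosed_range {S : X →L[𝕜] Y} (hS : IsClosed (S.range : Set Y)) :
    (adjoint S).range = S.kerᗮ := by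
  refine le_antisymm S.range_adjoint_le_orthogonal_ker ?_
  have : CompleteSpace S.range := hS.completeSpace_coe
  have hadj : adjoint S = adjoint S.rangeRestrict ∘L S.range.orthogonalProjectionOnto := by
    rw [← Submodule.adjoint_subtypeL, ← adjoint_comp]; rfl
  rw [← S.ker_codRestrict _ (LinearMap.mem_range_self _),
    ← range_adjoint_of_surjective (LinearMap.surjective_rangeRestrict _)]
  rintro _ ⟨m, rfl⟩
  exact ⟨m, by simp [hadj]⟩

theorem sup_range_adjoint_of_isClosed_range_prod {T : X →L[𝕜] Y} {V : X →L[𝕜] Z}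
    (h : IsClosed ((T.prod V).range : Set (Y × Z))) :
    (adjoint T).range ⊔ (adjoint V).range = (T.ker ⊓ V.ker)ᗮ := by
  refine le_antisymm (sup_le ?_ ?_) ?_
  · exact T.range_adjoint_le_orthogonal_ker.trans (Submodule.orthogonal_le inf_le_left)
  · exact V.range_adjoint_le_orthogonal_ker.trans (Submodule.orthogonal_le inf_le_right)
  let e := WithLp.prodContinuousLinearEquiv 2 𝕜 Y Z
  let L := (e.symm : Y × Z →L[𝕜] WithLp 2 (Y × Z)) ∘L T.prod V
  have hL : L.ker = T.ker ⊓ V.ker := by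
    ext x; simp [L]
  have hLadj : ∀ p, adjoint L p = adjoint T p.fst + adjoint V p.snd := by
    intro p
    refine ext_inner_left 𝕜 fun x ↦ ?_
    simp [adjoint_inner_right, inner_add_right, L, e]
  have hLrange : IsClosed (L.range : Set (WithLp 2 (Y × Z))) := by
    convert e.symm.toHomeomorph.isClosedMap _ h
    ext; simp [L]
  rw [← hL, ← range_adjoint_of_isClosed_range hLrange]
  rintro _ ⟨p, rfl⟩
  exact hLadj p ▸ Submodule.add_mem_sup (LinearMap.mem_range_self _ _)
    (LinearMap.mem_range_self _ _)

end ContinuousLinearMap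

end Hilbert

/-- The Krein adjoint `L^#` of `L = (T, V)` with respect to `[·,·]_ρ`. -/
def lSharp (JK : K →L[ℂ] K) (JE : E →L[ℂ] E) (T : H →L[ℂ] K) (V : H →L[ℂ] E) (ρ : ℝ) :
    K × E →L[ℂ] H :=
  adjoint T ∘L JK ∘L fst ℂ K E + (ρ : ℂ) • (adjoint V ∘L JE ∘L snd ℂ K E)

section Krein

variable {JK : K →L[ℂ] K} {JE : E →L[ℂ] E} {T : H →L[ℂ] K} {V : H →L[ℂ] E} {ρ : ℝ}

theorem lSharp_apply (p : K × E) :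
    lSharp JK JE T V ρ p = adjoint T (JK p.1) + (ρ : ℂ) • adjoint V (JE p.2) := rfl

theorem lSharp_comp_prod : lSharp JK JE T V ρ ∘L T.prod V = smOp JK JE T V ρ := rfl

theorem inner_lSharp (hJK : IsSelfAdjoint JK) (hJE : IsSelfAdjoint JE) (x : H) (p : K × E) :
    ⟪x, lSharp JK JE T V ρ p⟫ = ⟪JK (T x), p.1⟫ + (ρ : ℂ) * ⟪JE (V x), p.2⟫ := by
  rw [lSharp_apply, inner_add_right, inner_smul_right, adjoint_inner_right, adjoint_inner_right,
    hJK.inner_left_eq_inner_right, hJE.inner_left_eq_inner_right]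

theorem RLperp_eq_ker_lSharp (hJK : IsSelfAdjoint JK) (hJE : IsSelfAdjoint JE) :
    RLperp JK JE T V ρ = (lSharp JK JE T V ρ).ker := by
  ext p
  simp only [RLperp, Set.mem_ofPred_eq, SetLike.mem_coe, LinearMap.mem_ker, coe_coe,
    ← inner_lSharp hJK hJE]
  exact ⟨fun h ↦ inner_self_eq_zero.1 (h _), fun h x ↦ by rw [h, inner_zero_right]⟩

theorem range_lSharp (hJK : JK ∘L JK = 1) (hJE : JE ∘L JE = 1) (hρ : ρ ≠ 0) :
    (lSharp JK JE T V ρ).range = (adjoint T).range ⊔ (adjoint V).range := by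
  refine le_antisymm ?_ fun u hu ↦ ?_
  · rintro _ ⟨p, rfl⟩
    exact Submodule.add_mem_sup (LinearMap.mem_range_self _ _)
      (Submodule.smul_mem _ _ (LinearMap.mem_range_self _ _))
  obtain ⟨_, ⟨y, rfl⟩, _, ⟨z, rfl⟩, rfl⟩ := Submodule.mem_sup.1 hu
  refine ⟨(JK y, (ρ : ℂ)⁻¹ • JE z), ?_⟩
  have hρ' : (ρ : ℂ) ≠ 0 := Complex.ofReal_ne_zero.2 hρ
  simp [lSharp_apply, ← comp_apply JK, ← comp_apply JE, hJK, hJE, smul_smul, hρ']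

theorem smOp_isPositive (hJK : IsSelfAdjoint JK) (hJE : IsSelfAdjoint JE)
    (hpos : IsPosSemidef (smOp JK JE T V ρ)) : (smOp JK JE T V ρ).IsPositive := by
  have hsa : IsSelfAdjoint (smOp JK JE T V ρ) :=
    (hJK.adjoint_conj T).add (.smul (Complex.conj_ofReal ρ) (hJE.adjoint_conj V))
  exact isPositive_def'.2 ⟨hsa, fun x ↦ (hpos x).2⟩

theorem smSet_nonempty_iff (hJK : IsSelfAdjoint JK) (hJE : IsSelfAdjoint JE)
    (hpos : IsPosSemidef (smOp JK JE T V ρ)) (z₀ : E) :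
    (smSet JK JE T V ρ z₀).Nonempty ↔ lSharp JK JE T V ρ (0, z₀) ∈ (smOp JK JE T V ρ).range := by
  set w := lSharp JK JE T V ρ (0, z₀)
  have hF : ∀ x, (⟪JK (T x), T x⟫).re + ρ * (⟪JE (V x - z₀), V x - z₀⟫).re =
      re ⟪smOp JK JE T V ρ x, x⟫ - 2 * re ⟪w, x⟫ + ρ * (⟪JE z₀, z₀⟫).re := by
    intro x
    rw [inner_re_symm, inner_re_symm w, ← lSharp_comp_prod, comp_apply, inner_lSharp hJK hJE,
      inner_lSharp hJK hJE]
    have hsymm : (⟪JE z₀, V x⟫).re = (⟪JE (V x), z₀⟫).re := by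
      rw [hJE.inner_left_eq_inner_right, ← inner_conj_symm, Complex.conj_re]
    simp only [prod_apply, inner_zero_right, zero_add, map_sub, inner_sub_left, inner_sub_right,
      re_to_complex, Complex.add_re, Complex.sub_re, Complex.re_ofReal_mul, hsymm]
    ring
  have hsm : ∀ x, x ∈ smSet JK JE T V ρ z₀ ↔ ∀ y,
      re ⟪smOp JK JE T V ρ x, x⟫ - 2 * re ⟪w, x⟫ ≤ re ⟪smOp JK JE T V ρ y, y⟫ - 2 * re ⟪w, y⟫ := by
    intro x
    simp only [smSet, Set.mem_ofPred_eq, hF]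
    exact forall_congr' fun y ↦ add_le_add_iff_right _
  simp only [Set.Nonempty, hsm, (smOp_isPositive hJK hJE hpos).forall_quadratic_le_iff,
    LinearMap.mem_range, coe_coe]

theorem forall_ker_smOp_inner_eq_zero_iff (hJK : IsSelfAdjoint JK) (hJE : IsSelfAdjoint JE)
    (hρ : ρ ≠ 0) (z₀ : E) : (∀ x, smOp JK JE T V ρ x = 0 → ⟪JE z₀, V x⟫ = 0) ↔
      lSharp JK JE T V ρ (0, z₀) ∈ (smOp JK JE T V ρ).kerᗮ := by
  have hρ' : (ρ : ℂ) ≠ 0 := Complex.ofReal_ne_zero.2 hρ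
  simp only [Submodule.mem_orthogonal, LinearMap.mem_ker, coe_coe, inner_lSharp hJK hJE,
    inner_zero_right, zero_add, mul_eq_zero, hρ', false_or]
  refine forall_congr' fun u ↦ imp_congr_right fun _ ↦ ?_
  rw [hJE.inner_left_eq_inner_right, ← inner_conj_symm, map_eq_zero]

theorem range_add_RLperp (hJK : IsSelfAdjoint JK) (hJE : IsSelfAdjoint JE) :
    Set.range (fun x : H => (T x, V x)) + RLperp JK JE T V ρ =
      ((T.prod V).range ⊔ (lSharp JK JE T V ρ).ker : Submodule ℂ (K × E)) := by
  rw [Submodule.coe_sup, RLperp_eq_ker_lSharp hJK hJE, LinearMap.coe_range]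
  rfl

theorem range_lSharp_eq_orthogonal (hJK : JK ∘L JK = 1) (hJE : JE ∘L JE = 1) (hρ : ρ ≠ 0)
    (hTV : IsClosed ((T.prod V).range : Set (K × E))) :
    (lSharp JK JE T V ρ).range = (T.ker ⊓ V.ker)ᗮ := by
  rw [range_lSharp hJK hJE hρ, sup_range_adjoint_of_isClosed_range_prod hTV]

theorem exists_lSharp_eq_smOp_add (hT : Function.Surjective T) (p : K × E) :
    ∃ x z, lSharp JK JE T V ρ p = smOp JK JE T V ρ x + lSharp JK JE T V ρ (0, z) := by
  obtain ⟨x, hx⟩ := hT p.1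
  refine ⟨x, p.2 - V x, ?_⟩
  rw [← lSharp_comp_prod, comp_apply, ← map_add]
  congr
  ext <;> simp [hx]

theorem ker_inf_ker_le_ker_smOp : T.ker ⊓ V.ker ≤ (smOp JK JE T V ρ).ker := by
  rintro x ⟨hTx, hVx⟩
  rw [SetLike.mem_coe, LinearMap.mem_ker, coe_coe] at hTx hVx
  rw [LinearMap.mem_ker, coe_coe, ← lSharp_comp_prod, comp_apply, prod_apply, hTx, hVx,
    Prod.mk_zero_zero, map_zero]

theorem forall_smSet_nonempty_iff (hJK : IsSelfAdjoint JK) (hJK2 : JK ∘L JK = 1)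
    (hJE : IsSelfAdjoint JE) (hJE2 : JE ∘L JE = 1) (hT : Function.Surjective T) (hρ : ρ ≠ 0)
    (hpos : IsPosSemidef (smOp JK JE T V ρ)) (hTV : IsClosed ((T.prod V).range : Set (K × E))) :
    (∀ z₀ : E, (∀ x : H, smOp JK JE T V ρ x = 0 → ⟪JE z₀, V x⟫ = 0) →
      (smSet JK JE T V ρ z₀).Nonempty) ↔ IsClosed ((smOp JK JE T V ρ).range : Set H) := by
  simp only [forall_ker_smOp_inner_eq_zero_iff hJK hJE hρ, smSet_nonempty_iff hJK hJE hpos]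
  have hclosure : (smOp JK JE T V ρ).kerᗮ = (smOp JK JE T V ρ).range.topologicalClosure := by
    rw [orthogonal_ker, (smOp_isPositive hJK hJE hpos).isSelfAdjoint.adjoint_eq]
  refine ⟨fun h ↦ isClosed_of_closure_subset fun u hu ↦ ?_, fun h z hz ↦ ?_⟩
  · rw [← Submodule.topologicalClosure_coe, ← hclosure] at hu
    obtain ⟨p, rfl⟩ : ∃ p, lSharp JK JE T V ρ p = u := by
      rw [← coe_coe, ← LinearMap.mem_range, range_lSharp_eq_orthogonal hJK2 hJE2 hρ hTV]
      exact Submodule.orthogonal_le ker_inf_ker_le_ker_smOp hu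
    obtain ⟨x, z, hxz⟩ : ∃ x z,
        lSharp JK JE T V ρ p = smOp JK JE T V ρ x + lSharp JK JE T V ρ (0, z) :=
      exists_lSharp_eq_smOp_add hT p
    rw [hxz] at hu ⊢
    have hx : smOp JK JE T V ρ x ∈ (smOp JK JE T V ρ).kerᗮ :=
      hclosure ▸ Submodule.le_topologicalClosure _ (LinearMap.mem_range_self _ _)
    obtain ⟨y, hy⟩ := h z (by simpa using sub_mem hu hx)
    exact ⟨x + y, by simpa using hy⟩
  · rwa [hclosure, h.submodule_topologicalClosure_eq] at hz

end Krein

theorem stmt7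
    (JK : K →L[ℂ] K) (hJKsa : IsSelfAdjoint JK) (hJK2 : JK ∘L JK = 1)
    (JE : E →L[ℂ] E) (hJEsa : IsSelfAdjoint JE) (hJE2 : JE ∘L JE = 1)
    (T : H →L[ℂ] K) (V : H →L[ℂ] E)
    (hT : Function.Surjective T) (hV : Function.Surjective V)
    (ρ : ℝ) (hρ : ρ ≠ 0)
    (hpos : IsPosSemidef (smOp JK JE T V ρ))
    (hker : IsClosed ((LinearMap.ker (T : H →ₗ[ℂ] K) : Set H) + (LinearMap.ker (V : H →ₗ[ℂ] E) : Set H))) :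
    ((∀ z₀ : E, (∀ x : H, smOp JK JE T V ρ x = 0 → ⟪JE z₀, V x⟫ = 0) →
        (smSet JK JE T V ρ z₀).Nonempty) ↔
      IsClosed (Set.range (fun x : H => (T x, V x)) + RLperp JK JE T V ρ)) ∧
    (IsClosed (Set.range (fun x : H => (T x, V x)) + RLperp JK JE T V ρ) ↔
      IsClosed (Set.range (fun x : H => smOp JK JE T V ρ x))) := by
  rw [← Submodule.coe_sup] at hker
  have hTV := isClosed_range_prod hT hV hker
  have hD : IsClosed ((lSharp JK JE T V ρ).range : Set H) := by
    rw [range_lSharp_eq_orthogonal hJK2 hJE2 hρ hTV]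
    exact Submodule.isClosed_orthogonal _
  have h23 : IsClosed (Set.range (fun x : H => (T x, V x)) + RLperp JK JE T V ρ) ↔
      IsClosed ((smOp JK JE T V ρ).range : Set H) := by
    rw [range_add_RLperp hJKsa hJEsa, isClosed_range_sup_ker_iff hD]
    rfl
  exact ⟨(forall_smSet_nonempty_iff hJKsa hJK2 hJEsa hJE2 hT hρ hpos hTV).trans h23.symm, h23⟩
end
end

section
/- Assume [Tu,Tu]_K ≥ 0 for every u ∈ ker V, and let z₀ ∈ E. Then the following are equivalent: (1) sp(z₀) ≠ ∅, i.e. the function x ↦ [Tx,Tx]_K attains a minimum on the set {x ∈ H : Vx = z₀}; (2) z₀ ∈ V( ((T^#T)(ker V))^⊥ ), where ⊥ denotes the Hilbert orthogonal complement in H. In this case, sp(z₀) is an affine set parallel to N₀ := ker V ∩ ((T^#T)(ker V))^⊥, i.e. if x₀ ∈ sp(z₀) then sp(z₀) = x₀ + N₀. -/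
/-!
Write `A = T^#T = T*∘J_K∘T`, a symmetric operator with `[Tx,Tx]_K = ⟨Ax,x⟩`. On the affine set
`x + ker V` the quadratic form expands as `⟨A(x+u),x+u⟩ = ⟨Ax,x⟩ + 2 Re⟨u,Ax⟩ + ⟨Au,u⟩`. Since the
last term is nonnegative on `ker V`, `x` is a minimizer exactly when the linear term vanishes, i.e.
`Ax ⊥ ker V`, which by symmetry of `A` means `x ⊥ A(ker V)`. Hence `sp(z₀) = V⁻¹{z₀} ∩ A(ker V)^⊥`,
the intersection of a fibre of `V` with a subspace, which is a translate of `ker V ∩ A(ker V)^⊥`.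
-/

open scoped ComplexInnerProductSpace Pointwise

noncomputable section

variable {H K E : Type*}
  [NormedAddCommGroup H] [InnerProductSpace ℂ H] [CompleteSpace H]
  [NormedAddCommGroup K] [InnerProductSpace ℂ K] [CompleteSpace K]
  [NormedAddCommGroup E] [InnerProductSpace ℂ E] [CompleteSpace E]

open scoped InnerProductSpace

namespace LinearMap.IsSymmetric

variable {𝕜 F : Type*} [RCLike 𝕜] [NormedAddCommGroup F] [InnerProductSpace 𝕜 F]
  {A : F →ₗ[𝕜] F}

lemma orthogonal_map (hA : A.IsSymmetric) (N : Submodule 𝕜 F) :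
    (N.map A)ᗮ = Nᗮ.comap A := by
  ext x
  simp [Submodule.mem_orthogonal, hA _ x]

lemma re_inner_map_add_self (hA : A.IsSymmetric) (x u : F) :
    RCLike.re ⟪A (x + u), x + u⟫_𝕜 =
      RCLike.re ⟪A x, x⟫_𝕜 + 2 * RCLike.re ⟪u, A x⟫_𝕜 + RCLike.re ⟪A u, u⟫_𝕜 := by
  have hre : RCLike.re ⟪A x, u⟫_𝕜 = RCLike.re ⟪u, A x⟫_𝕜 := by
    rw [← inner_conj_symm, RCLike.conj_re]
  simp only [map_add, inner_add_left, inner_add_right, hA u x, hre]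
  ring

lemma re_inner_eq_zero_of_forall_le (hA : A.IsSymmetric) {x u : F}
    (h : ∀ s : ℝ, RCLike.re ⟪A x, x⟫_𝕜 ≤ RCLike.re ⟪A (x + (s : 𝕜) • u), x + (s : 𝕜) • u⟫_𝕜) :
    RCLike.re ⟪u, A x⟫_𝕜 = 0 := by
  set a := RCLike.re ⟪u, A x⟫_𝕜
  set q := RCLike.re ⟪A u, u⟫_𝕜
  have hquad : ∀ s : ℝ, 0 ≤ q * (s * s) + 2 * a * s + 0 := fun s => by
    have := h s
    rw [hA.re_inner_map_add_self, map_smul, inner_smul_left, inner_smul_left, inner_smul_right,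
      RCLike.conj_ofReal, ← mul_assoc, ← RCLike.ofReal_mul, RCLike.re_ofReal_mul,
      RCLike.re_ofReal_mul] at this
    linarith
  have := discrim_le_zero hquad
  rw [discrim] at this
  nlinarith [sq_nonneg a]

theorem forall_re_inner_le_add_iff (hA : A.IsSymmetric) {N : Submodule 𝕜 F}
    (hN : ∀ u ∈ N, 0 ≤ RCLike.re ⟪A u, u⟫_𝕜) (x : F) :
    (∀ u ∈ N, RCLike.re ⟪A x, x⟫_𝕜 ≤ RCLike.re ⟪A (x + u), x + u⟫_𝕜) ↔ A x ∈ Nᗮ := by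
  rw [Submodule.mem_orthogonal]
  constructor
  · intro hmin u hu
    have hre : ∀ v ∈ N, RCLike.re ⟪v, A x⟫_𝕜 = 0 := fun v hv =>
      hA.re_inner_eq_zero_of_forall_le fun s => hmin _ (N.smul_mem _ hv)
    -- testing against `⟪u, Ax⟫ • u` turns the real part into `‖⟪u, Ax⟫‖²`
    have := hre _ (N.smul_mem ⟪u, A x⟫_𝕜 hu)
    rw [inner_smul_left, RCLike.conj_mul, ← RCLike.ofReal_pow, RCLike.ofReal_re] at this
    exact norm_eq_zero.mp (pow_eq_zero_iff two_ne_zero |>.mp this)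
  · intro horth u hu
    rw [hA.re_inner_map_add_self, horth u hu]
    simpa using hN u hu

end LinearMap.IsSymmetric

lemma LinearMap.preimage_singleton_inter_eq_image_add {R M M₂ : Type*} [Ring R]
    [AddCommGroup M] [Module R M] [AddCommGroup M₂] [Module R M₂] (f : M →ₗ[R] M₂)
    (P : Submodule R M) {z : M₂} {x₀ : M} (hx₀ : x₀ ∈ f ⁻¹' {z} ∩ P) :
    f ⁻¹' {z} ∩ P = (fun n => x₀ + n) '' ((LinearMap.ker f ⊓ P : Submodule R M) : Set M) := by
  obtain ⟨hfx₀, hx₀P⟩ := hx₀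
  ext x
  constructor
  · rintro ⟨hfx, hxP⟩
    exact ⟨x - x₀, ⟨by simp_all, P.sub_mem hxP hx₀P⟩, add_sub_cancel x₀ x⟩
  · rintro ⟨n, ⟨hn, hnP⟩, rfl⟩
    exact ⟨by simp_all, P.add_mem hx₀P hnP⟩

lemma spSet_eq_preimage_inter_orthogonal {H K E : Type*}
    [NormedAddCommGroup H] [InnerProductSpace ℂ H] [CompleteSpace H]
    [NormedAddCommGroup K] [InnerProductSpace ℂ K] [CompleteSpace K]
    [NormedAddCommGroup E] [InnerProductSpace ℂ E]
    {JK : K →L[ℂ] K} (hJK : IsSelfAdjoint JK) (T : H →L[ℂ] K) (V : H →L[ℂ] E)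
    (hnn : ∀ u : H, V u = 0 → 0 ≤ (⟪JK (T u), T u⟫).re) (z₀ : E) :
    spSet JK T V z₀ = V ⁻¹' {z₀} ∩
      (Submodule.map ((ContinuousLinearMap.adjoint T ∘L JK ∘L T : H →L[ℂ] H) : H →ₗ[ℂ] H)
        (LinearMap.ker (V : H →ₗ[ℂ] E)))ᗮ := by
  set A := ContinuousLinearMap.adjoint T ∘L JK ∘L T
  have hA : (A : H →ₗ[ℂ] H).IsSymmetric := (hJK.adjoint_conj T).isSymmetric
  have hform : ∀ x, ⟪JK (T x), T x⟫ = ⟪A x, x⟫ := fun x => by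
    simp [A, ContinuousLinearMap.adjoint_inner_left]
  have hN : ∀ u ∈ LinearMap.ker (V : H →ₗ[ℂ] E), 0 ≤ RCLike.re ⟪(A : H →ₗ[ℂ] H) u, u⟫ :=
    fun u hu => by simpa [hform] using hnn u hu
  ext x
  rw [Set.mem_inter_iff, SetLike.mem_coe, hA.orthogonal_map, Submodule.mem_comap,
    ← hA.forall_re_inner_le_add_iff hN]
  simp only [spSet, Set.mem_ofPred_eq, Set.mem_preimage, Set.mem_singleton_iff, hform]
  refine and_congr_right fun hx => ⟨fun h u hu => h _ (by simp_all), fun h y hy => ?_⟩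
  simpa using h (y - x) (by simp [hx, hy])

theorem stmt9_general
    (JK : K →L[ℂ] K) (hJKsa : IsSelfAdjoint JK)
    (T : H →L[ℂ] K) (V : H →L[ℂ] E)
    (hnn : ∀ u : H, V u = 0 → 0 ≤ (⟪JK (T u), T u⟫).re) (z₀ : E) :
    ((spSet JK T V z₀).Nonempty ↔
      z₀ ∈ V ''
        (((Submodule.map (((ContinuousLinearMap.adjoint T) ∘L JK ∘L T : H →L[ℂ] H) : H →ₗ[ℂ] H)
          (LinearMap.ker (V : H →ₗ[ℂ] E)))ᗮ : Set H))) ∧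
    (∀ x₀ ∈ spSet JK T V z₀,
      spSet JK T V z₀ = (fun n => x₀ + n) '' ((N0 JK T V : Submodule ℂ H) : Set H)) := by
  rw [spSet_eq_preimage_inter_orthogonal hJKsa T V hnn]
  refine ⟨?_, fun x₀ hx₀ => LinearMap.preimage_singleton_inter_eq_image_add (V : H →ₗ[ℂ] E) _ hx₀⟩
  exact ⟨fun ⟨x, hx, hxP⟩ => ⟨x, hxP, hx⟩, fun ⟨x, hxP, hx⟩ => ⟨x, hx, hxP⟩⟩

theorem stmt9
    (JK : K →L[ℂ] K) (hJKsa : IsSelfAdjoint JK) (hJK2 : JK ∘L JK = 1)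
    (JE : E →L[ℂ] E) (hJEsa : IsSelfAdjoint JE) (hJE2 : JE ∘L JE = 1)
    (T : H →L[ℂ] K) (V : H →L[ℂ] E)
    (hT : Function.Surjective T) (hV : Function.Surjective V)
    (hnn : ∀ u : H, V u = 0 → 0 ≤ (⟪JK (T u), T u⟫).re) (z₀ : E) :
    ((spSet JK T V z₀).Nonempty ↔
      z₀ ∈ V ''
        (((Submodule.map (((ContinuousLinearMap.adjoint T) ∘L JK ∘L T : H →L[ℂ] H) : H →ₗ[ℂ] H)
          (LinearMap.ker (V : H →ₗ[ℂ] E)))ᗮ : Set H))) ∧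
    (∀ x₀ ∈ spSet JK T V z₀,
      spSet JK T V z₀ = (fun n => x₀ + n) '' ((N0 JK T V : Submodule ℂ H) : Set H)) :=
  stmt9_general JK hJKsa T V hnn z₀
end
end

section
/- Let N₀ := ker V ∩ ((T^#T)(ker V))^⊥, where ⊥ denotes the Hilbert orthogonal complement in H. Then the isotropic part of T(ker V), namely T(ker V) ∩ {y ∈ K : [y,Tu]_K = 0 for all u ∈ ker V}, equals T(N₀). Moreover, T(ker V) = T(N₀) ∔ T(ker V ∩ N₀^⊥), a direct sum of subspaces that are mutually orthogonal with respect to [·,·]_K. -/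
/-!
Since `J_K` is self-adjoint, `⟪x, T^#T u⟫ = [Tx, Tu]_K`, so `N₀` consists of the `x ∈ ker V`
with `Tx` `[·,·]_K`-orthogonal to `T(ker V)`. For `x ∈ ker V` this only depends on `Tx`: this
gives the description of the isotropic part, the `[·,·]_K`-orthogonality of the two summands, and
that `Tq ∈ T(N₀)` forces `q ∈ N₀ ∩ N₀^⊥ = 0` for `q ∈ ker V ∩ N₀^⊥`. The sum itself is the
Hilbert decomposition `ker V = N₀ ⊕ (ker V ∩ N₀^⊥)` of a closed subspace, pushed forward by `T`.
-/

open scoped ComplexInnerProductSpace Pointwise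

noncomputable section

variable {H K E : Type*}
  [NormedAddCommGroup H] [InnerProductSpace ℂ H] [CompleteSpace H]
  [NormedAddCommGroup K] [InnerProductSpace ℂ K] [CompleteSpace K]
  [NormedAddCommGroup E] [InnerProductSpace ℂ E] [CompleteSpace E]

theorem inner_adjoint_comp_comp_apply {𝕜 X Y : Type*} [RCLike 𝕜]
    [NormedAddCommGroup X] [InnerProductSpace 𝕜 X] [CompleteSpace X]
    [NormedAddCommGroup Y] [InnerProductSpace 𝕜 Y] [CompleteSpace Y]
    {J : Y →L[𝕜] Y} (hJ : IsSelfAdjoint J) (T : X →L[𝕜] Y) (x u : X) :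
    inner 𝕜 x ((ContinuousLinearMap.adjoint T ∘L J ∘L T) u) = inner 𝕜 (J (T x)) (T u) := by
  rw [ContinuousLinearMap.comp_apply, ContinuousLinearMap.comp_apply,
    ContinuousLinearMap.adjoint_inner_right]
  exact (hJ.isSymmetric _ _).symm

theorem Submodule.mem_orthogonal_map_iff {𝕜 X Y : Type*} [RCLike 𝕜]
    [NormedAddCommGroup X] [InnerProductSpace 𝕜 X] [NormedAddCommGroup Y] [InnerProductSpace 𝕜 Y]
    (A : X →ₗ[𝕜] Y) (W : Submodule 𝕜 X) (y : Y) :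
    y ∈ (W.map A)ᗮ ↔ ∀ u ∈ W, inner 𝕜 y (A u) = 0 := by
  simp only [Submodule.mem_orthogonal', Submodule.mem_map, forall_exists_index, and_imp,
    forall_apply_eq_imp_iff₂]

theorem Submodule.image_sup {R M N : Type*} [Semiring R] [AddCommMonoid M] [AddCommMonoid N]
    [Module R M] [Module R N] (f : M →ₗ[R] N) (p q : Submodule R M) :
    f '' ↑(p ⊔ q) = f '' p + f '' q := by
  rw [← Submodule.map_coe, Submodule.map_sup, Submodule.coe_sup, Submodule.map_coe,
    Submodule.map_coe]

section

variable {X Y Z : Type*}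
  [NormedAddCommGroup X] [InnerProductSpace ℂ X] [CompleteSpace X]
  [NormedAddCommGroup Y] [InnerProductSpace ℂ Y] [CompleteSpace Y]
  [NormedAddCommGroup Z] [InnerProductSpace ℂ Z]
  (JK : Y →L[ℂ] Y) (T : X →L[ℂ] Y) (V : X →L[ℂ] Z)

theorem isClosed_N0 : IsClosed (N0 JK T V : Set X) :=
  (ContinuousLinearMap.isClosed_ker V).inter (Submodule.isClosed_orthogonal _)

instance : (N0 JK T V).HasOrthogonalProjection :=
  haveI := (isClosed_N0 JK T V).completeSpace_coe
  inferInstance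

theorem N0_le_ker : N0 JK T V ≤ LinearMap.ker (V : X →ₗ[ℂ] Z) := inf_le_left

theorem N0_sup_ker_inf_orthogonal :
    N0 JK T V ⊔ (LinearMap.ker (V : X →ₗ[ℂ] Z) ⊓ (N0 JK T V)ᗮ) =
      LinearMap.ker (V : X →ₗ[ℂ] Z) := by
  rw [inf_comm]
  exact Submodule.sup_orthogonal_inf_of_hasOrthogonalProjection (N0_le_ker JK T V)

variable {JK} (hJK : IsSelfAdjoint JK)
include hJK

theorem mem_N0_iff {x : X} :
    x ∈ N0 JK T V ↔ V x = 0 ∧ ∀ u : X, V u = 0 → ⟪JK (T x), T u⟫ = 0 := by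
  simp only [N0, Submodule.mem_inf, LinearMap.mem_ker, ContinuousLinearMap.coe_coe,
    Submodule.mem_orthogonal_map_iff, inner_adjoint_comp_comp_apply hJK]

theorem mem_N0_of_apply_eq {p q : X} (hp : p ∈ N0 JK T V) (hq : V q = 0) (hpq : T q = T p) :
    q ∈ N0 JK T V :=
  (mem_N0_iff T V hJK).mpr ⟨hq, hpq ▸ ((mem_N0_iff T V hJK).mp hp).2⟩

theorem eq_zero_of_mem_ker_inf_orthogonal_N0 {p q : X} (hp : p ∈ N0 JK T V)
    (hq : q ∈ LinearMap.ker (V : X →ₗ[ℂ] Z) ⊓ (N0 JK T V)ᗮ) (hpq : T q = T p) : q = 0 :=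
  Submodule.disjoint_def.mp (Submodule.orthogonal_disjoint _) q
    (mem_N0_of_apply_eq T V hJK hp hq.1 hpq) hq.2

end

theorem stmt10_general
    (JK : K →L[ℂ] K) (hJKsa : IsSelfAdjoint JK)
    (T : H →L[ℂ] K) (V : H →L[ℂ] E) :
    (T '' (LinearMap.ker (V : H →ₗ[ℂ] E) : Set H) ∩
        {y : K | ∀ u : H, V u = 0 → ⟪JK y, T u⟫ = 0} =
      T '' ((N0 JK T V : Submodule ℂ H) : Set H)) ∧
    (T '' (LinearMap.ker (V : H →ₗ[ℂ] E) : Set H) =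
      T '' ((N0 JK T V : Submodule ℂ H) : Set H) +
        T '' ((LinearMap.ker (V : H →ₗ[ℂ] E) ⊓ (N0 JK T V)ᗮ : Submodule ℂ H) : Set H)) ∧
    (T '' ((N0 JK T V : Submodule ℂ H) : Set H) ∩
        T '' ((LinearMap.ker (V : H →ₗ[ℂ] E) ⊓ (N0 JK T V)ᗮ : Submodule ℂ H) : Set H) = {0}) ∧
    (∀ a ∈ T '' ((N0 JK T V : Submodule ℂ H) : Set H),
      ∀ b ∈ T '' ((LinearMap.ker (V : H →ₗ[ℂ] E) ⊓ (N0 JK T V)ᗮ : Submodule ℂ H) : Set H),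
        ⟪JK a, b⟫ = 0) := by
  refine ⟨?_, ?_, ?_, ?_⟩
  · ext y
    constructor
    · rintro ⟨⟨x, hx, rfl⟩, hy⟩
      exact ⟨x, (mem_N0_iff T V hJKsa).mpr ⟨hx, hy⟩, rfl⟩
    · rintro ⟨x, hx, rfl⟩
      exact ⟨⟨x, N0_le_ker JK T V hx, rfl⟩, ((mem_N0_iff T V hJKsa).mp hx).2⟩
  · conv_lhs => rw [← N0_sup_ker_inf_orthogonal JK T V]
    exact Submodule.image_sup (T : H →ₗ[ℂ] K) _ _
  · refine Set.eq_singleton_iff_unique_mem.mpr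
      ⟨⟨⟨0, zero_mem _, map_zero T⟩, ⟨0, zero_mem _, map_zero T⟩⟩, ?_⟩
    rintro _ ⟨⟨p, hp, rfl⟩, q, hq, hqp⟩
    rw [← hqp, eq_zero_of_mem_ker_inf_orthogonal_N0 T V hJKsa hp hq hqp, map_zero]
  · rintro _ ⟨p, hp, rfl⟩ _ ⟨q, ⟨hqV, -⟩, rfl⟩
    exact ((mem_N0_iff T V hJKsa).mp hp).2 q hqV

theorem stmt10
    (JK : K →L[ℂ] K) (hJKsa : IsSelfAdjoint JK) (hJK2 : JK ∘L JK = 1)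
    (JE : E →L[ℂ] E) (hJEsa : IsSelfAdjoint JE) (hJE2 : JE ∘L JE = 1)
    (T : H →L[ℂ] K) (V : H →L[ℂ] E)
    (hT : Function.Surjective T) (hV : Function.Surjective V) :
    (T '' (LinearMap.ker (V : H →ₗ[ℂ] E) : Set H) ∩
        {y : K | ∀ u : H, V u = 0 → ⟪JK y, T u⟫ = 0} =
      T '' ((N0 JK T V : Submodule ℂ H) : Set H)) ∧
    (T '' (LinearMap.ker (V : H →ₗ[ℂ] E) : Set H) =
      T '' ((N0 JK T V : Submodule ℂ H) : Set H) +
        T '' ((LinearMap.ker (V : H →ₗ[ℂ] E) ⊓ (N0 JK T V)ᗮ : Submodule ℂ H) : Set H)) ∧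
    (T '' ((N0 JK T V : Submodule ℂ H) : Set H) ∩
        T '' ((LinearMap.ker (V : H →ₗ[ℂ] E) ⊓ (N0 JK T V)ᗮ : Submodule ℂ H) : Set H) = {0}) ∧
    (∀ a ∈ T '' ((N0 JK T V : Submodule ℂ H) : Set H),
      ∀ b ∈ T '' ((LinearMap.ker (V : H →ₗ[ℂ] E) ⊓ (N0 JK T V)ᗮ : Submodule ℂ H) : Set H),
        ⟪JK a, b⟫ = 0) :=
  stmt10_general JK hJKsa T V
end
end

section
/- Let N₀ := ker V ∩ ((T^#T)(ker V))^⊥, where ⊥ denotes the Hilbert orthogonal complement in H, and let T(ker V)^[⊥] := {y ∈ K : [y,Tu]_K = 0 for all u ∈ ker V}. Then T(ker V) + T(ker V)^[⊥] is a closed subspace of K (i.e. T(ker V) is pseudo-regular) if and only if ker V + ((T^#T)(ker V))^⊥ is a closed subspace of H. In this case, the subspace M := T(ker V ∩ N₀^⊥) is regular in K, i.e. M + {y ∈ K : [y,m]_K = 0 for all m ∈ M} = K. -/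
/-!
Put `A := T^#T = T* J_K T`, a self-adjoint operator on `H` whose range equals the range of `T*`,
hence is closed because `T` is surjective. With `W := ker V` and `Q := (A W)^⊥ = A⁻¹(W^⊥)`, the
Krein companion of `T(W)` is `T(Q)`, and `ker T ⊆ Q`; since `T` is open, `T(W) + T(Q) = T(W + Q)`
is closed exactly when `W + Q` is.

For regularity let `N₀ := W ∩ Q` and `N := W ∩ N₀^⊥`; it suffices that `A(N) + N^⊥ = H`, for then
`A x = A n + z` with `z ⊥ N` makes `T(x - n)` Krein-orthogonal to `T(N)`. If `W + Q` is closed,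
the closed range theorem gives `N₀^⊥ = W^⊥ + Q^⊥`, and `Q^⊥ = closure (A W) ⊆ range A` yields
`Q^⊥ ⊆ A W + W^⊥`. As `W = N₀ ⊕ N` and `A N₀ ⊥ W`, this gives `N₀^⊥ ⊆ A N + N^⊥`, while `N₀ ⊆ N^⊥`.
-/

open scoped ComplexInnerProductSpace Pointwise

noncomputable section

variable {H K E : Type*}
  [NormedAddCommGroup H] [InnerProductSpace ℂ H] [CompleteSpace H]
  [NormedAddCommGroup K] [InnerProductSpace ℂ K] [CompleteSpace K]
  [NormedAddCommGroup E] [InnerProductSpace ℂ E] [CompleteSpace E]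

/-- `((T^#T)(ker V))^⊥`, the Hilbert orthogonal complement in `H` of the image of
`ker V` under `T^#T`. -/
def TTkerVperp (JK : K →L[ℂ] K) (T : H →L[ℂ] K) (V : H →L[ℂ] E) : Submodule ℂ H :=
  (Submodule.map (((ContinuousLinearMap.adjoint T) ∘L JK ∘L T : H →L[ℂ] H) : H →ₗ[ℂ] H)
    (LinearMap.ker (V : H →ₗ[ℂ] E)))ᗮ

open ContinuousLinearMap Function Submodule

section ClosedRange

variable {𝕜 F G : Type*} [RCLike 𝕜]
  [NormedAddCommGroup F] [InnerProductSpace 𝕜 F] [CompleteSpace F]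
  [NormedAddCommGroup G] [InnerProductSpace 𝕜 G] [CompleteSpace G]

theorem ContinuousLinearMap.exists_antilipschitzWith_adjoint_of_surjective (f : F →L[𝕜] G)
    (hf : Surjective f) : ∃ C, AntilipschitzWith C (adjoint f) := by
  obtain ⟨C, hC, hpre⟩ := f.exists_preimage_norm_le hf
  refine ⟨⟨C, hC.le⟩, (adjoint f).antilipschitz_of_bound fun y => ?_⟩
  obtain ⟨x, rfl, hx⟩ := hpre y
  have key : ‖f x‖ * ‖f x‖ ≤ C * ‖adjoint f (f x)‖ * ‖f x‖ :=
    calc ‖f x‖ * ‖f x‖ = ‖inner 𝕜 (adjoint f (f x)) x‖ := by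
          rw [adjoint_inner_left, inner_self_eq_norm_sq_to_K, norm_pow, RCLike.norm_ofReal,
            abs_norm, sq]
      _ ≤ ‖adjoint f (f x)‖ * ‖x‖ := norm_inner_le_norm _ _
      _ ≤ ‖adjoint f (f x)‖ * (C * ‖f x‖) := by gcongr
      _ = C * ‖adjoint f (f x)‖ * ‖f x‖ := by ring
  rcases (norm_nonneg (f x)).eq_or_lt with h0 | hpos
  · rw [← h0]; positivity
  · exact le_of_mul_le_mul_right key hpos

theorem ContinuousLinearMap.range_adjoint_of_surjective_s12 (f : F →L[𝕜] G) (hf : Surjective f) :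
    (adjoint f).range = f.kerᗮ := by
  obtain ⟨C, hC⟩ := f.exists_antilipschitzWith_adjoint_of_surjective hf
  have hclosed : IsClosed ((adjoint f).range : Set F) := by
    rw [LinearMap.coe_range]
    exact hC.isClosed_range (adjoint f).uniformContinuous
  rw [orthogonal_ker, hclosed.submodule_topologicalClosure_eq]

theorem ContinuousLinearMap.range_adjoint_of_isClosed_range_s12 (f : F →L[𝕜] G)
    (hf : IsClosed (f.range : Set G)) : (adjoint f).range = f.kerᗮ := by
  have : CompleteSpace f.range := hf.completeSpace_coe
  have hfactor : adjoint f = adjoint f.rangeRestrict ∘L f.range.orthogonalProjectionOnto := by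
    conv_lhs => rw [show f = f.range.subtypeL ∘L f.rangeRestrict from rfl]
    rw [adjoint_comp, adjoint_subtypeL]
  have hsurj : Surjective f.rangeRestrict := by
    rintro ⟨_, x, rfl⟩; exact ⟨x, rfl⟩
  have hproj : (f.range.orthogonalProjectionOnto : G →ₗ[𝕜] f.range).range = ⊤ :=
    LinearMap.range_eq_top.mpr fun v => ⟨v, orthogonalProjectionOnto_mem_subspace_eq_self v⟩
  rw [hfactor]
  exact (LinearMap.range_comp_of_range_eq_top _ hproj).trans
    ((range_adjoint_of_surjective_s12 _ hsurj).trans (by rw [ker_codRestrict]))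

theorem ContinuousLinearMap.range_adjoint_comp_of_surjective {D : Type*} [NormedAddCommGroup D]
    [NormedSpace 𝕜 D] {T : F →L[𝕜] G} (hT : Surjective T) {S : D →L[𝕜] G} (hS : Surjective S) :
    (adjoint T ∘L S).range = T.kerᗮ :=
  (LinearMap.range_comp_of_range_eq_top _ (LinearMap.range_eq_top.mpr hS)).trans
    (range_adjoint_of_surjective_s12 T hT)

end ClosedRange

theorem ContinuousLinearMap.isClosed_image_iff_of_ker_le {𝕜 F G : Type*}
    [NontriviallyNormedField 𝕜] [NormedAddCommGroup F] [NormedSpace 𝕜 F] [CompleteSpace F]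
    [NormedAddCommGroup G] [NormedSpace 𝕜 G] [CompleteSpace G] {T : F →L[𝕜] G}
    (hT : Surjective T) {S : Submodule 𝕜 F} (hS : T.ker ≤ S) :
    IsClosed (T '' S) ↔ IsClosed (S : Set F) := by
  have hpre : T ⁻¹' (T '' S) = S := congrArg SetLike.coe (comap_map_eq_self hS)
  rw [← ((T.isOpenMap hT).isQuotientMap T.continuous hT).isClosed_preimage, hpre]

namespace Submodule

variable {𝕜 F : Type*} [RCLike 𝕜] [NormedAddCommGroup F] [InnerProductSpace 𝕜 F]
  {X Y : Submodule 𝕜 F} [X.HasOrthogonalProjection] [Y.HasOrthogonalProjection]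

theorem range_starProjection_orthogonal_comp_starProjection :
    (Xᗮ.starProjection ∘L Y.starProjection).range = Xᗮ ⊓ (X ⊔ Y) := by
  apply le_antisymm
  · rintro _ ⟨x, rfl⟩
    refine ⟨starProjection_apply_mem _ _, ?_⟩
    change Xᗮ.starProjection (Y.starProjection x) ∈ X ⊔ Y
    rw [starProjection_orthogonal, sub_apply, id_apply]
    exact sub_mem (mem_sup_right (starProjection_apply_mem _ _))
      (mem_sup_left (starProjection_apply_mem _ _))
  · rintro z ⟨hzX, hz⟩
    obtain ⟨x, hx, y, hy, rfl⟩ := mem_sup.mp hz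
    refine ⟨y, ?_⟩
    have hxX : Xᗮ.starProjection x = 0 :=
      (starProjection_apply_eq_zero_iff _).mpr (le_orthogonal_orthogonal X hx)
    change Xᗮ.starProjection (Y.starProjection y) = x + y
    rw [starProjection_eq_self_iff.mpr hy, ← starProjection_eq_self_iff.mpr hzX,
      map_add, hxX, zero_add]

/-- `P_{Xᗮ} P_Y` has the closed range `Xᗮ ⊓ (X ⊔ Y)`, so by the closed range theorem the range of
its adjoint `P_Y P_{Xᗮ}` is the orthogonal complement of its kernel, which contains `P_Y u`. -/
theorem orthogonal_inf_le_sup_orthogonal [CompleteSpace F]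
    (h : IsClosed ((X ⊔ Y : Submodule 𝕜 F) : Set F)) :
    (X ⊓ Y)ᗮ ≤ Xᗮ ⊔ Yᗮ := by
  intro u hu
  set f := Xᗮ.starProjection ∘L Y.starProjection
  have hclosed : IsClosed (f.range : Set F) := by
    rw [range_starProjection_orthogonal_comp_starProjection, coe_inf]
    exact (isClosed_orthogonal X).inter h
  have hadj : adjoint f = Y.starProjection ∘L Xᗮ.starProjection := by
    rw [adjoint_comp, (isSelfAdjoint_starProjection _).adjoint_eq,
      (isSelfAdjoint_starProjection _).adjoint_eq]
  have hPu : Y.starProjection u ∈ f.kerᗮ := by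
    intro k hk
    have hkX : Y.starProjection k ∈ X := by
      rw [← orthogonal_orthogonal X, ← starProjection_apply_eq_zero_iff]
      exact hk
    rw [← inner_starProjection_left_eq_right]
    exact hu _ ⟨hkX, starProjection_apply_mem _ _⟩
  rw [← range_adjoint_of_isClosed_range_s12 f hclosed, hadj] at hPu
  obtain ⟨v, hv⟩ := hPu
  refine mem_sup.mpr ⟨_, starProjection_apply_mem Xᗮ v, u - Xᗮ.starProjection v, ?_,
    add_sub_cancel _ _⟩
  rw [← starProjection_apply_eq_zero_iff, map_sub, sub_eq_zero]
  exact hv.symm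

end Submodule

namespace IsSelfAdjoint

variable {𝕜 F : Type*} [RCLike 𝕜] [NormedAddCommGroup F] [InnerProductSpace 𝕜 F] [CompleteSpace F]
  {A : F →L[𝕜] F}

theorem orthogonal_map_eq_comap_orthogonal (hA : IsSelfAdjoint A) (W : Submodule 𝕜 F) :
    (W.map (A : F →ₗ[𝕜] F))ᗮ = Wᗮ.comap (A : F →ₗ[𝕜] F) := by
  have hsymm : ∀ a b, inner 𝕜 (A a) b = inner 𝕜 a (A b) := hA.isSymmetric
  ext x
  simp only [mem_orthogonal, mem_map, mem_comap, forall_exists_index, and_imp,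
    forall_apply_eq_imp_iff₂, coe_coe, hsymm]

theorem orthogonal_orthogonal_map_le (hA : IsSelfAdjoint A) (hAr : IsClosed (A.range : Set F))
    {W : Submodule 𝕜 F} (hsum : IsClosed ((W ⊔ (W.map (A : F →ₗ[𝕜] F))ᗮ : Submodule 𝕜 F) : Set F)) :
    (W.map (A : F →ₗ[𝕜] F))ᗮᗮ ≤ W.map (A : F →ₗ[𝕜] F) ⊔ Wᗮ := by
  set Q := (W.map (A : F →ₗ[𝕜] F))ᗮ
  have hQ : ∀ x, x ∈ Q ↔ A x ∈ Wᗮ :=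
    SetLike.ext_iff.mp (hA.orthogonal_map_eq_comap_orthogonal W)
  have hrange : Qᗮ ≤ A.range := by
    rw [orthogonal_orthogonal_eq_closure]
    exact topologicalClosure_minimal _ LinearMap.map_le_range hAr
  intro u hu
  obtain ⟨x, rfl⟩ := hrange hu
  have hx : x ∈ W ⊔ Q := by
    rw [← hsum.submodule_topologicalClosure_eq, ← orthogonal_orthogonal_eq_closure,
      ← inf_orthogonal]
    rintro s ⟨hsW, hsQ⟩
    obtain ⟨q, rfl⟩ := hrange hsQ
    exact (hA.isSymmetric q x).trans (hu q ((hQ q).mpr hsW))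
  obtain ⟨w, hw, q, hq, rfl⟩ := mem_sup.mp hx
  rw [coe_coe, map_add]
  exact add_mem (mem_sup_left (mem_map_of_mem hw)) (mem_sup_right ((hQ q).mp hq))

theorem map_sup_orthogonal_eq_top (hA : IsSelfAdjoint A) (hAr : IsClosed (A.range : Set F))
    {W : Submodule 𝕜 F} (hW : IsClosed (W : Set F))
    (hsum : IsClosed ((W ⊔ (W.map (A : F →ₗ[𝕜] F))ᗮ : Submodule 𝕜 F) : Set F)) :
    (W ⊓ (W ⊓ (W.map (A : F →ₗ[𝕜] F))ᗮ)ᗮ).map (A : F →ₗ[𝕜] F) ⊔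
      (W ⊓ (W ⊓ (W.map (A : F →ₗ[𝕜] F))ᗮ)ᗮ)ᗮ = ⊤ := by
  set Q := (W.map (A : F →ₗ[𝕜] F))ᗮ
  set N₀ := W ⊓ Q
  set N := W ⊓ N₀ᗮ
  have : CompleteSpace W := hW.completeSpace_coe
  have : CompleteSpace N₀ := (hW.inter (isClosed_orthogonal _)).completeSpace_coe
  have hWN : Wᗮ ≤ Nᗮ := orthogonal_le inf_le_left
  have hmapW : W.map (A : F →ₗ[𝕜] F) ≤ N.map (A : F →ₗ[𝕜] F) ⊔ Nᗮ := by
    have hmapN₀ : N₀.map (A : F →ₗ[𝕜] F) ≤ Wᗮ :=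
      map_le_iff_le_comap.mpr (hA.orthogonal_map_eq_comap_orthogonal W ▸ inf_le_right)
    have hsplit : N₀ ⊔ N = W := by
      rw [show N = N₀ᗮ ⊓ W from inf_comm _ _]
      exact sup_orthogonal_inf_of_hasOrthogonalProjection inf_le_left
    rw [← hsplit, Submodule.map_sup]
    exact sup_le (hmapN₀.trans (hWN.trans le_sup_right)) le_sup_left
  have hQ : Qᗮ ≤ N.map (A : F →ₗ[𝕜] F) ⊔ Nᗮ :=
    (hA.orthogonal_orthogonal_map_le hAr hsum).trans (sup_le hmapW (hWN.trans le_sup_right))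
  have hN₀ : N₀ ≤ Nᗮ := (le_orthogonal_orthogonal N₀).trans (orthogonal_le inf_le_right)
  rw [eq_top_iff, ← sup_orthogonal_of_hasOrthogonalProjection (K := N₀)]
  exact sup_le (hN₀.trans le_sup_right) ((orthogonal_inf_le_sup_orthogonal hsum).trans
    (sup_le (hWN.trans le_sup_right) hQ))

end IsSelfAdjoint

section GramOperator

variable {𝕜 F G : Type*} [RCLike 𝕜]
  [NormedAddCommGroup F] [InnerProductSpace 𝕜 F] [CompleteSpace F]
  [NormedAddCommGroup G] [InnerProductSpace 𝕜 G] [CompleteSpace G] {J : G →L[𝕜] G}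

theorem IsSelfAdjoint.coe_orthogonal_map_adjoint_comp (hJ : IsSelfAdjoint J) (T : F →L[𝕜] G)
    (W : Submodule 𝕜 F) :
    ((W.map (adjoint T ∘L J ∘L T : F →ₗ[𝕜] F))ᗮ : Set F) =
      T ⁻¹' {y | ∀ u ∈ W, inner 𝕜 (J y) (T u) = 0} := by
  ext x
  rw [SetLike.mem_coe, (hJ.adjoint_conj T).orthogonal_map_eq_comap_orthogonal W, mem_comap,
    mem_orthogonal']
  simp [adjoint_inner_left]

theorem ContinuousLinearMap.image_add_setOf_inner_eq_zero_eq_univ {T : F →L[𝕜] G}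
    (hT : Surjective T) {N : Submodule 𝕜 F}
    (h : N.map (adjoint T ∘L J ∘L T : F →ₗ[𝕜] F) ⊔ Nᗮ = ⊤) :
    T '' N + {y | ∀ m ∈ T '' N, inner 𝕜 (J y) m = 0} = Set.univ := by
  refine Set.eq_univ_of_forall fun y => ?_
  obtain ⟨x, rfl⟩ := hT y
  obtain ⟨_, ⟨n, hn, rfl⟩, z, hz, hx⟩ := mem_sup.mp (h ▸ mem_top : adjoint T (J (T x)) ∈ _)
  refine ⟨T n, ⟨n, hn, rfl⟩, T (x - n), ?_, by simp⟩
  rintro _ ⟨n', hn', rfl⟩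
  have hz' : adjoint T (J (T (x - n))) = z := by
    rw [map_sub, map_sub, map_sub, ← hx]
    simp
  rw [← adjoint_inner_left, hz']
  exact (mem_orthogonal' _ _).mp hz n' hn'

end GramOperator

theorem stmt12_general
    (JK : K →L[ℂ] K) (hJKsa : IsSelfAdjoint JK) (hJK2 : JK ∘L JK = 1)
    (T : H →L[ℂ] K) (V : H →L[ℂ] E)
    (hT : Function.Surjective T) :
    (IsClosed (T '' (LinearMap.ker (V : H →ₗ[ℂ] E) : Set H) +
        {y : K | ∀ u : H, V u = 0 → ⟪JK y, T u⟫ = 0}) ↔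
      IsClosed ((LinearMap.ker (V : H →ₗ[ℂ] E) : Set H) + (TTkerVperp JK T V : Set H))) ∧
    (IsClosed (T '' (LinearMap.ker (V : H →ₗ[ℂ] E) : Set H) +
        {y : K | ∀ u : H, V u = 0 → ⟪JK y, T u⟫ = 0}) →
      T '' ((LinearMap.ker (V : H →ₗ[ℂ] E) ⊓ (N0 JK T V)ᗮ : Submodule ℂ H) : Set H) +
        {y : K | ∀ m : K,
          m ∈ T '' ((LinearMap.ker (V : H →ₗ[ℂ] E) ⊓ (N0 JK T V)ᗮ : Submodule ℂ H) : Set H) →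
          ⟪JK y, m⟫ = 0} = Set.univ) := by
  set A := adjoint T ∘L JK ∘L T
  set W := LinearMap.ker (V : H →ₗ[ℂ] E)
  have hA : IsSelfAdjoint A := hJKsa.adjoint_conj T
  have hJK : Surjective JK := fun y => ⟨JK y, by simpa using DFunLike.congr_fun hJK2 y⟩
  have hAr : IsClosed (A.range : Set H) := by
    rw [range_adjoint_comp_of_surjective (S := JK ∘L T) hT (hJK.comp hT)]
    exact isClosed_orthogonal _
  have hQ := hJKsa.coe_orthogonal_map_adjoint_comp T W
  have hker : T.ker ≤ W ⊔ TTkerVperp JK T V := fun x hx => by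
    rw [LinearMap.mem_ker, coe_coe] at hx
    refine mem_sup_right ?_
    rw [← SetLike.mem_coe, TTkerVperp, hQ]
    simp [hx]
  have hclosed : IsClosed (T '' W + {y : K | ∀ u : H, V u = 0 → ⟪JK y, T u⟫ = 0}) ↔
      IsClosed ((W ⊔ TTkerVperp JK T V : Submodule ℂ H) : Set H) := by
    rw [← isClosed_image_iff_of_ker_le hT hker, coe_sup, Set.image_add, TTkerVperp, hQ,
      Set.image_preimage_eq _ hT]
    rfl
  exact ⟨hclosed.trans (by rw [coe_sup]), fun h => image_add_setOf_inner_eq_zero_eq_univ hT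
    (hA.map_sup_orthogonal_eq_top hAr V.isClosed_ker (hclosed.mp h))⟩

theorem stmt12
    (JK : K →L[ℂ] K) (hJKsa : IsSelfAdjoint JK) (hJK2 : JK ∘L JK = 1)
    (JE : E →L[ℂ] E) (hJEsa : IsSelfAdjoint JE) (hJE2 : JE ∘L JE = 1)
    (T : H →L[ℂ] K) (V : H →L[ℂ] E)
    (hT : Function.Surjective T) (hV : Function.Surjective V) :
    (IsClosed (T '' (LinearMap.ker (V : H →ₗ[ℂ] E) : Set H) +
        {y : K | ∀ u : H, V u = 0 → ⟪JK y, T u⟫ = 0}) ↔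
      IsClosed ((LinearMap.ker (V : H →ₗ[ℂ] E) : Set H) + (TTkerVperp JK T V : Set H))) ∧
    (IsClosed (T '' (LinearMap.ker (V : H →ₗ[ℂ] E) : Set H) +
        {y : K | ∀ u : H, V u = 0 → ⟪JK y, T u⟫ = 0}) →
      T '' ((LinearMap.ker (V : H →ₗ[ℂ] E) ⊓ (N0 JK T V)ᗮ : Submodule ℂ H) : Set H) +
        {y : K | ∀ m : K,
          m ∈ T '' ((LinearMap.ker (V : H →ₗ[ℂ] E) ⊓ (N0 JK T V)ᗮ : Submodule ℂ H) : Set H) →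
          ⟪JK y, m⟫ = 0} = Set.univ) :=
  stmt12_general JK hJKsa hJK2 T V hT
end
end

section
/- Let T(ker V)^[⊥] := {y ∈ K : [y,Tu]_K = 0 for all u ∈ ker V}. Then T(ker V) + T(ker V)^[⊥] = K (i.e. T(ker V) is a regular subspace of K) if and only if H = ker V + ((T^#T)(ker V))^⊥, where ⊥ denotes the Hilbert orthogonal complement in H. -/
/-!
Since `⟪T^#T u, x⟫ = conj [Tx, Tu]_K`, the preimage under `T` of `T(ker V)^[⊥]` is exactly
`(T^#T(ker V))^⊥`. For a surjective additive map `T`, a decomposition `Tx = Tu + y` with `y` in a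
set `W` is the same as a decomposition `x = u + (x - u)` with `x - u ∈ T⁻¹ W`.
-/

open scoped ComplexInnerProductSpace Pointwise

noncomputable section

variable {H K E : Type*}
  [NormedAddCommGroup H] [InnerProductSpace ℂ H] [CompleteSpace H]
  [NormedAddCommGroup K] [InnerProductSpace ℂ K] [CompleteSpace K]
  [NormedAddCommGroup E] [InnerProductSpace ℂ E] [CompleteSpace E]

theorem Set.image_add_eq_univ_iff {F G G' : Type*} [AddGroup G] [AddGroup G'] [FunLike F G G']
    [AddMonoidHomClass F G G'] {f : F} (hf : Function.Surjective f) (S : Set G) (W : Set G') :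
    f '' S + W = Set.univ ↔ S + f ⁻¹' W = Set.univ := by
  simp only [Set.eq_univ_iff_forall, Set.mem_add, Set.mem_image, Set.mem_preimage]
  constructor
  · intro h x
    obtain ⟨_, ⟨s, hs, rfl⟩, w, hw, hsw⟩ := h (f x)
    refine ⟨s, hs, -s + x, ?_, add_neg_cancel_left s x⟩
    rwa [map_add, map_neg, ← hsw, neg_add_cancel_left]
  · intro h y
    obtain ⟨x, rfl⟩ := hf y
    obtain ⟨s, hs, p, hp, rfl⟩ := h x
    exact ⟨f s, ⟨s, hs, rfl⟩, f p, hp, (map_add f s p).symm⟩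

theorem mem_orthogonal_map_adjoint_comp_comp_iff {J : K →L[ℂ] K} (hJ : IsSelfAdjoint J)
    (T : H →L[ℂ] K) (N : Submodule ℂ H) (x : H) :
    x ∈ (N.map ((ContinuousLinearMap.adjoint T ∘L J ∘L T : H →L[ℂ] H) : H →ₗ[ℂ] H))ᗮ ↔
      ∀ u ∈ N, ⟪J (T x), T u⟫ = 0 := by
  simp only [Submodule.mem_orthogonal, Submodule.mem_map, forall_exists_index, and_imp,
    forall_apply_eq_imp_iff₂]
  refine forall₂_congr fun u _ => ?_
  have hconj :
      ⟪(ContinuousLinearMap.adjoint T ∘L J ∘L T) u, x⟫ = starRingEnd ℂ ⟪J (T x), T u⟫ := by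
    rw [ContinuousLinearMap.comp_apply, ContinuousLinearMap.comp_apply,
      ContinuousLinearMap.adjoint_inner_left, inner_conj_symm]
    exact hJ.isSymmetric _ _
  rw [ContinuousLinearMap.coe_coe, hconj, map_eq_zero]

theorem stmt13_general
    (JK : K →L[ℂ] K) (hJKsa : IsSelfAdjoint JK)
    (T : H →L[ℂ] K) (V : H →L[ℂ] E)
    (hT : Function.Surjective T) :
    (T '' (LinearMap.ker (V : H →ₗ[ℂ] E) : Set H) +
        {y : K | ∀ u : H, V u = 0 → ⟪JK y, T u⟫ = 0} = Set.univ) ↔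
      ((LinearMap.ker (V : H →ₗ[ℂ] E) : Set H) +
        (((Submodule.map (((ContinuousLinearMap.adjoint T) ∘L JK ∘L T : H →L[ℂ] H) : H →ₗ[ℂ] H)
          (LinearMap.ker (V : H →ₗ[ℂ] E)))ᗮ : Set H)) = Set.univ) := by
  rw [Set.image_add_eq_univ_iff hT]
  congr! 2
  ext x
  exact (mem_orthogonal_map_adjoint_comp_comp_iff hJKsa T (LinearMap.ker (V : H →ₗ[ℂ] E)) x).symm

theorem stmt13
    (JK : K →L[ℂ] K) (hJKsa : IsSelfAdjoint JK) (hJK2 : JK ∘L JK = 1)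
    (JE : E →L[ℂ] E) (hJEsa : IsSelfAdjoint JE) (hJE2 : JE ∘L JE = 1)
    (T : H →L[ℂ] K) (V : H →L[ℂ] E)
    (hT : Function.Surjective T) (hV : Function.Surjective V) :
    (T '' (LinearMap.ker (V : H →ₗ[ℂ] E) : Set H) +
        {y : K | ∀ u : H, V u = 0 → ⟪JK y, T u⟫ = 0} = Set.univ) ↔
      ((LinearMap.ker (V : H →ₗ[ℂ] E) : Set H) +
        (((Submodule.map (((ContinuousLinearMap.adjoint T) ∘L JK ∘L T : H →L[ℂ] H) : H →ₗ[ℂ] H)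
          (LinearMap.ker (V : H →ₗ[ℂ] E)))ᗮ : Set H)) = Set.univ) :=
  stmt13_general JK hJKsa T V hT
end
end

section
/- Let ρ ∈ ℝ, ρ ≠ 0. If [Tx,Tx]_K + ρ·[Vx,Vx]_E ≥ 0 for every x ∈ H (i.e. R(L) is nonnegative with respect to [·,·]_ρ), then T(ker V) is a positive subspace of K, i.e. [y,y]_K > 0 for every nonzero y ∈ T(ker V); in particular T(ker V) is nondegenerate. If moreover R(L) is closed in K×E, then T(ker V) is closed in K. -/
/-!
The form `q x = [Tx,Tx]_K + ρ [Vx,Vx]_E` is nonnegative on `H`. If `x₀ ∈ ker V`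
is `[·,·]_K`-neutral under `T`, then `q x₀ = 0`, and since `V x₀ = 0` the expansion of
`q (x₀ + c u) ≥ 0` in `c ∈ ℂ` has no cross terms in `E`, so it forces `[Tx₀, Tu]_K = 0` for all `u`.
As `T` is onto, `J_K T x₀ ⊥ K`, hence `T x₀ = 0`. Closedness holds because `T (ker V)` is the
preimage of `R(L)` under `y ↦ (y, 0)`.
-/

open scoped ComplexInnerProductSpace Pointwise

noncomputable section

variable {H K E : Type*}
  [NormedAddCommGroup H] [InnerProductSpace ℂ H] [CompleteSpace H]
  [NormedAddCommGroup K] [InnerProductSpace ℂ K] [CompleteSpace K]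
  [NormedAddCommGroup E] [InnerProductSpace ℂ E] [CompleteSpace E]

theorem Complex.eq_zero_of_forall_two_mul_re_add_normSq_mul_nonneg {w : ℂ} {a : ℝ}
    (h : ∀ c : ℂ, 0 ≤ 2 * (c * w).re + Complex.normSq c * a) : w = 0 := by
  by_contra hw
  have hs : 0 < Complex.normSq w := Complex.normSq_pos.mpr hw
  set t : ℝ := 1 / (|a| + 1) with ht
  have ht0 : 0 < t := by positivity
  have hta : t * |a| + t = 1 := by rw [ht]; field_simp
  -- at `c = -t w̄` the linear term `-2t‖w‖²` beats the quadratic one `t²‖w‖²a`, since `t|a| < 1`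
  have key := h (-(t : ℂ) * (starRingEnd ℂ) w)
  have hcw : -(t : ℂ) * (starRingEnd ℂ) w * w = ((-t * Complex.normSq w : ℝ) : ℂ) := by
    rw [mul_assoc, ← Complex.normSq_eq_conj_mul_self]; push_cast; ring
  rw [hcw, Complex.ofReal_re, Complex.normSq_mul, Complex.normSq_neg, Complex.normSq_ofReal,
    Complex.normSq_conj] at key
  nlinarith [le_abs_self a, mul_pos ht0 hs, mul_pos (mul_pos ht0 ht0) hs]

section Sesquilinear

variable {X : Type*} [NormedAddCommGroup X] [InnerProductSpace ℂ X]

theorem inner_map_smul_smul (A : X →ₗ[ℂ] X) (c : ℂ) (z : X) :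
    ⟪A (c • z), c • z⟫ = Complex.normSq c * ⟪A z, z⟫ := by
  rw [map_smul, inner_smul_left, inner_smul_right, Complex.normSq_eq_conj_mul_self]
  ring

theorem LinearMap.IsSymmetric.re_inner_map_add_smul_s14 {A : X →ₗ[ℂ] X} (hA : A.IsSymmetric)
    (y z : X) (c : ℂ) :
    (⟪A (y + c • z), y + c • z⟫).re =
      (⟪A y, y⟫).re + 2 * (c * ⟪A y, z⟫).re + Complex.normSq c * (⟪A z, z⟫).re := by
  have hcross : ⟪A (c • z), y⟫ = (starRingEnd ℂ) (c * ⟪A y, z⟫) := by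
    rw [map_smul, inner_smul_left, map_mul, hA.conj_inner_sym]
  rw [map_add, inner_add_left, inner_add_right, inner_add_right, hcross,
    inner_map_smul_smul, inner_smul_right]
  simp only [Complex.add_re, Complex.conj_re, Complex.re_ofReal_mul]
  ring

end Sesquilinear

section NonnegativeRange

variable {X Y Z : Type*} [NormedAddCommGroup X] [InnerProductSpace ℂ X]
  [NormedAddCommGroup Y] [InnerProductSpace ℂ Y] [NormedAddCommGroup Z] [InnerProductSpace ℂ Z]
  {J : Y →ₗ[ℂ] Y} {J' : Z →ₗ[ℂ] Z} {T : X →ₗ[ℂ] Y} {V : X →ₗ[ℂ] Z} {ρ : ℝ}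

theorem inner_map_eq_zero_of_mem_ker_of_re_inner_eq_zero (hJ : J.IsSymmetric)
    (hnn : ∀ x, 0 ≤ (⟪J (T x), T x⟫).re + ρ * (⟪J' (V x), V x⟫).re)
    {x₀ : X} (hx₀ : x₀ ∈ LinearMap.ker V) (hiso : (⟪J (T x₀), T x₀⟫).re = 0) (u : X) :
    ⟪J (T x₀), T u⟫ = 0 := by
  refine Complex.eq_zero_of_forall_two_mul_re_add_normSq_mul_nonneg
    (a := (⟪J (T u), T u⟫).re + ρ * (⟪J' (V u), V u⟫).re) fun c => ?_
  have h := hnn (x₀ + c • u)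
  rw [map_add T, map_smul T, map_add V, map_smul V, LinearMap.mem_ker.mp hx₀, zero_add,
    hJ.re_inner_map_add_smul_s14, inner_map_smul_smul, Complex.re_ofReal_mul, hiso] at h
  linarith

theorem re_inner_map_pos_of_mem_ker (hJ : J.IsSymmetric) (hJinj : Function.Injective J)
    (hT : Function.Surjective T)
    (hnn : ∀ x, 0 ≤ (⟪J (T x), T x⟫).re + ρ * (⟪J' (V x), V x⟫).re)
    {x₀ : X} (hx₀ : x₀ ∈ LinearMap.ker V) (hTx₀ : T x₀ ≠ 0) :
    0 < (⟪J (T x₀), T x₀⟫).re := by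
  have hnonneg : 0 ≤ (⟪J (T x₀), T x₀⟫).re := by
    simpa [LinearMap.mem_ker.mp hx₀] using hnn x₀
  refine hnonneg.lt_of_ne fun hiso => hTx₀ (hJinj ?_)
  obtain ⟨u, hu⟩ := hT (J (T x₀))
  have horth := inner_map_eq_zero_of_mem_ker_of_re_inner_eq_zero hJ hnn hx₀ hiso.symm u
  rw [hu, inner_self_eq_zero] at horth
  rw [horth, map_zero]

end NonnegativeRange

theorem isClosed_image_ker_of_isClosed_range {R X Y Z : Type*} [Semiring R]
    [AddCommMonoid X] [Module R X] [AddCommMonoid Z] [Module R Z]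
    [TopologicalSpace Y] [TopologicalSpace Z] (T : X → Y) (V : X →ₗ[R] Z)
    (h : IsClosed (Set.range fun x => (T x, V x))) :
    IsClosed (T '' (LinearMap.ker V : Set X)) := by
  have hpre : T '' (LinearMap.ker V : Set X) =
      (fun y => (y, (0 : Z))) ⁻¹' Set.range fun x => (T x, V x) := by
    ext y
    simp [and_comm]
  exact hpre ▸ h.preimage (by fun_prop)

theorem stmt14_general
    (JK : K →L[ℂ] K) (hJKsa : IsSelfAdjoint JK) (hJK2 : JK ∘L JK = 1)
    (JE : E →L[ℂ] E)
    (T : H →L[ℂ] K) (V : H →L[ℂ] E)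
    (hT : Function.Surjective T)
    (ρ : ℝ)
    (hnn : ∀ x : H, 0 ≤ (⟪JK (T x), T x⟫).re + ρ * (⟪JE (V x), V x⟫).re) :
    (∀ y ∈ T '' (LinearMap.ker (V : H →ₗ[ℂ] E) : Set H), y ≠ 0 → 0 < (⟪JK y, y⟫).re) ∧
    (∀ y ∈ T '' (LinearMap.ker (V : H →ₗ[ℂ] E) : Set H),
      (∀ u : H, V u = 0 → ⟪JK y, T u⟫ = 0) → y = 0) ∧
    (IsClosed (Set.range (fun x : H => (T x, V x))) →
      IsClosed (T '' (LinearMap.ker (V : H →ₗ[ℂ] E) : Set H))) := by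
  have hJKinj : Function.Injective JK :=
    Function.LeftInverse.injective (g := JK) fun y => by simpa using DFunLike.congr_fun hJK2 y
  have hpos : ∀ y ∈ T '' (LinearMap.ker (V : H →ₗ[ℂ] E) : Set H), y ≠ 0 → 0 < (⟪JK y, y⟫).re := by
    rintro _ ⟨x₀, hx₀, rfl⟩
    exact re_inner_map_pos_of_mem_ker (T := T) hJKsa.isSymmetric hJKinj hT hnn hx₀
  refine ⟨hpos, ?_, isClosed_image_ker_of_isClosed_range T (V : H →ₗ[ℂ] E)⟩
  rintro _ ⟨x₀, hx₀, rfl⟩ horth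
  by_contra hTx₀
  simpa [horth x₀ hx₀] using hpos _ ⟨x₀, hx₀, rfl⟩ hTx₀

theorem stmt14
    (JK : K →L[ℂ] K) (hJKsa : IsSelfAdjoint JK) (hJK2 : JK ∘L JK = 1)
    (JE : E →L[ℂ] E) (hJEsa : IsSelfAdjoint JE) (hJE2 : JE ∘L JE = 1)
    (T : H →L[ℂ] K) (V : H →L[ℂ] E)
    (hT : Function.Surjective T) (hV : Function.Surjective V)
    (ρ : ℝ) (hρ : ρ ≠ 0)
    (hnn : ∀ x : H, 0 ≤ (⟪JK (T x), T x⟫).re + ρ * (⟪JE (V x), V x⟫).re) :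
    (∀ y ∈ T '' (LinearMap.ker (V : H →ₗ[ℂ] E) : Set H), y ≠ 0 → 0 < (⟪JK y, y⟫).re) ∧
    (∀ y ∈ T '' (LinearMap.ker (V : H →ₗ[ℂ] E) : Set H),
      (∀ u : H, V u = 0 → ⟪JK y, T u⟫ = 0) → y = 0) ∧
    (IsClosed (Set.range (fun x : H => (T x, V x))) →
      IsClosed (T '' (LinearMap.ker (V : H →ₗ[ℂ] E) : Set H))) :=
  stmt14_general JK hJKsa hJK2 JE T V hT ρ hnn
end
end

section
/- Let ρ ∈ ℝ, ρ ≠ 0. If R(L) is closed in K×E, [Tx,Tx]_K + ρ·[Vx,Vx]_E ≥ 0 for every x ∈ H, and R(L) + R(L)^[⊥] is closed in K×E (i.e. R(L) is a nonnegative pseudo-regular subspace for [·,·]_ρ), then T(ker V) is a closed, uniformly positive subspace of K: it is closed and there exists α > 0 such that [y,y]_K ≥ α·‖y‖² for every y ∈ T(ker V). -/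
open scoped ComplexInnerProductSpace Pointwise

noncomputable section

variable {H K E : Type*}
  [NormedAddCommGroup H] [InnerProductSpace ℂ H] [CompleteSpace H]
  [NormedAddCommGroup K] [InnerProductSpace ℂ K] [CompleteSpace K]
  [NormedAddCommGroup E] [InnerProductSpace ℂ E] [CompleteSpace E]

/-!
Give `K × E` the Hilbert norm of `K ⊕₂ E`. Then `[·,·]_ρ = ⟪J ·, ·⟫` for the invertible
self-adjoint operator `J = J_K ⊕ ρ J_E`, and `S = R(L)` is a closed subspace on which this form is
nonnegative. Its compression `G = P_S J|_S` is a positive operator on `S` whose kernel is the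
isotropic part `S ∩ S^[⊥]` and whose range is `S ∩ (J S + Sᗮ) = S ∩ J (S + S^[⊥])`, closed by
pseudo-regularity. A positive operator with closed range is bounded below on its range, so every
`s ∈ S` has an isotropic `z` with `α ‖s - z‖² ≤ [s, s]`.

For `x ∈ ker V` and `s = L x`, testing `z ∈ R(L)^[⊥]` against an `x'` with `T x' = J_K z_K`
(chosen with `‖x'‖ ≲ ‖z_K‖` since `T` is open) gives `‖z_K‖ ≤ c ‖z_E‖`, while `z_E = -(s - z)_E`.
Hence `‖T x‖ ≤ (1 + c) ‖s - z‖` and `[T x, T x]_K = [s, s] ≥ α / (1 + c)² ‖T x‖²`. Closedness of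
`T (ker V)` is that of `R(L) ∩ (K × {0})`.
-/

open scoped InnerProductSpace

namespace ContinuousLinearMap

variable {𝕜 X : Type*} [RCLike 𝕜] [NormedAddCommGroup X] [InnerProductSpace 𝕜 X]

lemma IsPositive.norm_inner_sq_le {G : X →L[𝕜] X} (hG : G.IsPositive) (x y : X) :
    ‖⟪G x, y⟫_𝕜‖ ^ 2 ≤ RCLike.re ⟪G x, x⟫_𝕜 * RCLike.re ⟪G y, y⟫_𝕜 := by
  -- Cauchy–Schwarz for the semi-inner product `⟪G ·, ·⟫`.
  let core : PreInnerProductSpace.Core 𝕜 X :=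
    { inner := fun x y => ⟪G x, y⟫_𝕜
      conj_inner_symm := fun x y => by
        simp only [inner_conj_symm]; exact (hG.inner_left_eq_inner_right x y).symm
      re_inner_nonneg := hG.re_inner_nonneg_left
      add_left := fun x y z => by simp only [map_add, inner_add_left]
      smul_left := fun x y r => by simp only [map_smul, inner_smul_left] }
  have h := @InnerProductSpace.Core.inner_mul_inner_self_le 𝕜 X _ _ _ core x y
  have hyx : ‖⟪G y, x⟫_𝕜‖ = ‖⟪G x, y⟫_𝕜‖ := by
    rw [hG.inner_left_eq_inner_right, norm_inner_symm]
  exact (sq _).trans_le (hyx ▸ h)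

variable [CompleteSpace X]

lemma IsPositive.exists_pos_mul_norm_sq_le_of_mem_range {G : X →L[𝕜] X} (hG : G.IsPositive)
    (hrange : IsClosed (G.range : Set X)) :
    ∃ α > 0, ∀ y ∈ G.range, α * ‖y‖ ^ 2 ≤ RCLike.re ⟪G y, y⟫_𝕜 := by
  have : CompleteSpace G.range := hrange.completeSpace_coe
  obtain ⟨C, hC, hpre⟩ := G.rangeRestrict.exists_preimage_norm_le G.surjective_rangeRestrict
  refine ⟨C⁻¹, inv_pos.2 hC, fun y hy => ?_⟩
  -- With `G u = y`, `‖u‖ ≤ C ‖y‖`: `‖y‖⁴ = |⟪G u, y⟫|² ≤ ⟪G u, u⟫ ⟪G y, y⟫ ≤ C ‖y‖² ⟪G y, y⟫`.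
  obtain ⟨u, hu, hnorm⟩ := hpre ⟨y, hy⟩
  replace hu : G u = y := congrArg Subtype.val hu
  replace hnorm : ‖u‖ ≤ C * ‖y‖ := hnorm
  have hy_sq : ‖y‖ ^ 2 ≤ ‖⟪G u, y⟫_𝕜‖ := by
    rw [hu, ← inner_self_eq_norm_sq (𝕜 := 𝕜)]
    exact RCLike.re_le_norm _
  have hGu : RCLike.re ⟪G u, u⟫_𝕜 ≤ C * ‖y‖ ^ 2 :=
    calc RCLike.re ⟪G u, u⟫_𝕜 ≤ ‖G u‖ * ‖u‖ := (RCLike.re_le_norm _).trans (norm_inner_le_norm _ _)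
      _ ≤ ‖y‖ * (C * ‖y‖) := by rw [hu]; gcongr
      _ = C * ‖y‖ ^ 2 := by ring
  have key : ‖y‖ ^ 2 * ‖y‖ ^ 2 ≤ ‖y‖ ^ 2 * (C * RCLike.re ⟪G y, y⟫_𝕜) :=
    calc ‖y‖ ^ 2 * ‖y‖ ^ 2 ≤ ‖⟪G u, y⟫_𝕜‖ ^ 2 := by nlinarith [sq_nonneg ‖y‖]
      _ ≤ RCLike.re ⟪G u, u⟫_𝕜 * RCLike.re ⟪G y, y⟫_𝕜 := hG.norm_inner_sq_le u y
      _ ≤ C * ‖y‖ ^ 2 * RCLike.re ⟪G y, y⟫_𝕜 := by gcongr; exact hG.re_inner_nonneg_left y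
      _ = ‖y‖ ^ 2 * (C * RCLike.re ⟪G y, y⟫_𝕜) := by ring
  rcases eq_or_ne y 0 with rfl | hy0
  · simp
  · rw [inv_mul_le_iff₀ hC]
    exact le_of_mul_le_mul_left key (by positivity)

lemma IsPositive.exists_pos_mul_norm_sub_sq_le {G : X →L[𝕜] X} (hG : G.IsPositive)
    (hrange : IsClosed (G.range : Set X)) :
    ∃ α > 0, ∀ x, ∃ z ∈ G.ker, α * ‖x - z‖ ^ 2 ≤ RCLike.re ⟪G x, x⟫_𝕜 := by
  have : CompleteSpace G.range := hrange.completeSpace_coe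
  obtain ⟨α, hα, hcoer⟩ := hG.exists_pos_mul_norm_sq_le_of_mem_range hrange
  refine ⟨α, hα, fun x => ?_⟩
  obtain ⟨y, hy, z, hz_perp, rfl⟩ := Submodule.exists_add_mem_mem_orthogonal (K := G.range) x
  have hz : G z = 0 := by
    rwa [hG.isSymmetric.orthogonal_range] at hz_perp
  refine ⟨z, hz, ?_⟩
  have : ⟪G (y + z), y + z⟫_𝕜 = ⟪G y, y⟫_𝕜 := by
    rw [map_add, hz, add_zero, inner_add_right, hG.inner_left_eq_inner_right y z, hz,
      inner_zero_right, add_zero]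
  rw [add_sub_cancel_right, this]
  exact hcoer y hy

end ContinuousLinearMap

namespace Submodule

variable {𝕜 W : Type*} [RCLike 𝕜] [NormedAddCommGroup W] [InnerProductSpace 𝕜 W]
  (S : Submodule 𝕜 W) (J : W →L[𝕜] W)

def compression [S.HasOrthogonalProjection] : S →L[𝕜] S :=
  S.orthogonalProjectionOnto ∘L J ∘L S.subtypeL

variable {S J}

-- `(S.map J)ᗮ` is the orthogonal companion `S^[⊥]` of `S` for the form `⟪J ·, ·⟫`.
lemma mem_orthogonal_map_iff_s15 {w : W} : w ∈ (S.map J.toLinearMap)ᗮ ↔ ∀ s ∈ S, ⟪J s, w⟫_𝕜 = 0 := by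
  simp [mem_orthogonal]

lemma map_sup_orthogonal_map (hJ : J.toLinearMap.IsSymmetric)
    (hsurj : Function.Surjective J) :
    (S ⊔ (S.map J.toLinearMap)ᗮ).map J.toLinearMap = S.map J.toLinearMap ⊔ Sᗮ := by
  rw [map_sup]
  congr 1
  ext w
  simp_rw [mem_map, mem_orthogonal_map_iff_s15, mem_orthogonal]
  constructor
  · rintro ⟨v, hv, rfl⟩ s hs
    rw [← hJ]
    exact hv s hs
  · intro hw
    obtain ⟨v, rfl⟩ := hsurj w
    exact ⟨v, fun s hs => (hJ s v).trans (hw s hs), rfl⟩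

section Compression

variable [S.HasOrthogonalProjection]

lemma inner_compression_left (σ τ : S) : ⟪S.compression J σ, τ⟫_𝕜 = ⟪J σ, (τ : W)⟫_𝕜 :=
  inner_orthogonalProjectionOnto_eq_of_mem_right τ (J σ)

lemma isPositive_compression (hJ : J.toLinearMap.IsSymmetric)
    (hnonneg : ∀ s ∈ S, 0 ≤ RCLike.re ⟪J s, s⟫_𝕜) : (S.compression J).IsPositive := by
  refine ⟨fun σ τ => ?_, fun σ => ?_⟩
  · change ⟪S.compression J σ, τ⟫_𝕜 = ⟪σ, S.compression J τ⟫_𝕜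
    rw [inner_compression_left, ← inner_conj_symm σ, inner_compression_left, inner_conj_symm]
    exact hJ σ τ
  · change 0 ≤ RCLike.re ⟪S.compression J σ, σ⟫_𝕜
    rw [inner_compression_left]
    exact hnonneg σ σ.2

lemma compression_eq_zero_iff (hJ : J.toLinearMap.IsSymmetric) {σ : S} :
    S.compression J σ = 0 ↔ (σ : W) ∈ (S.map J.toLinearMap)ᗮ := by
  rw [mem_orthogonal_map_iff_s15]
  simp only [compression, ContinuousLinearMap.comp_apply, orthogonalProjectionOnto_eq_zero_iff,
    mem_orthogonal]
  exact forall₂_congr fun s _ => by rw [← ContinuousLinearMap.coe_coe, ← hJ]; rfl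

lemma range_compression :
    (S.compression J).range = (S.map J.toLinearMap ⊔ Sᗮ).comap S.subtype := by
  ext σ
  simp only [LinearMap.mem_range, ContinuousLinearMap.coe_coe, mem_comap, subtype_apply,
    mem_sup, mem_map]
  constructor
  · rintro ⟨τ, rfl⟩
    have hτ := neg_mem (sub_starProjection_mem_orthogonal (K := S) (J τ))
    rw [neg_sub] at hτ
    exact ⟨J τ, ⟨τ, τ.2, rfl⟩, _, hτ, add_sub_cancel _ _⟩
  · rintro ⟨_, ⟨τ, hτ, rfl⟩, w, hw, hσ⟩
    refine ⟨⟨τ, hτ⟩, Subtype.ext ?_⟩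
    exact eq_starProjection_of_mem_orthogonal' σ.2 (neg_mem hw) (by rw [← hσ]; abel)

end Compression

variable [CompleteSpace W]

theorem exists_pos_mul_norm_sub_sq_le_of_pseudoRegular (hJ : J.toLinearMap.IsSymmetric)
    (hJunit : IsUnit J) (hS : IsClosed (S : Set W)) (hnonneg : ∀ s ∈ S, 0 ≤ RCLike.re ⟪J s, s⟫_𝕜)
    (hpr : IsClosed ((S ⊔ (S.map J.toLinearMap)ᗮ : Submodule 𝕜 W) : Set W)) :
    ∃ α > 0, ∀ s ∈ S, ∃ z ∈ S ⊓ (S.map J.toLinearMap)ᗮ,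
      α * ‖s - z‖ ^ 2 ≤ RCLike.re ⟪J s, s⟫_𝕜 := by
  have : CompleteSpace S := hS.completeSpace_coe
  have hrange : IsClosed ((S.compression J).range : Set S) := by
    let J' := ContinuousLinearEquiv.ofUnit hJunit.unit
    have hJS : IsClosed ((S.map J.toLinearMap ⊔ Sᗮ : Submodule 𝕜 W) : Set W) := by
      rw [← map_sup_orthogonal_map hJ J'.surjective]
      exact J'.isClosed_image.2 hpr
    rw [range_compression]
    exact hJS.preimage continuous_subtype_val
  obtain ⟨α, hα, hcoer⟩ :=
    (isPositive_compression hJ hnonneg).exists_pos_mul_norm_sub_sq_le hrange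
  refine ⟨α, hα, fun s hs => ?_⟩
  obtain ⟨z, hz, hle⟩ := hcoer ⟨s, hs⟩
  refine ⟨z, ⟨z.2, (compression_eq_zero_iff hJ).1 hz⟩, ?_⟩
  rwa [inner_compression_left] at hle

end Submodule

namespace ContinuousLinearMap

variable {𝕜 X Y Z : Type*} [RCLike 𝕜] [NormedAddCommGroup X] [InnerProductSpace 𝕜 X]
  [NormedAddCommGroup Y] [InnerProductSpace 𝕜 Y] [NormedAddCommGroup Z] [InnerProductSpace 𝕜 Z]

def prodL2 (f : X →L[𝕜] Y) (g : X →L[𝕜] Z) : X →L[𝕜] WithLp 2 (Y × Z) :=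
  (WithLp.prodContinuousLinearEquiv 2 𝕜 Y Z).symm.toContinuousLinearMap ∘L f.prod g

def prodMapL2 (A : Y →L[𝕜] Y) (B : Z →L[𝕜] Z) : WithLp 2 (Y × Z) →L[𝕜] WithLp 2 (Y × Z) :=
  (WithLp.prodContinuousLinearEquiv 2 𝕜 Y Z).symm.toContinuousLinearMap ∘L A.prodMap B ∘L
    (WithLp.prodContinuousLinearEquiv 2 𝕜 Y Z).toContinuousLinearMap

lemma inner_prodMapL2_left (A : Y →L[𝕜] Y) (B : Z →L[𝕜] Z) (u v : WithLp 2 (Y × Z)) :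
    ⟪prodMapL2 A B u, v⟫_𝕜 = ⟪A u.fst, v.fst⟫_𝕜 + ⟪B u.snd, v.snd⟫_𝕜 := rfl

lemma prodMapL2_mul (A A' : Y →L[𝕜] Y) (B B' : Z →L[𝕜] Z) :
    prodMapL2 A B * prodMapL2 A' B' = prodMapL2 (A * A') (B * B') := rfl

lemma prodMapL2_one : prodMapL2 (1 : Y →L[𝕜] Y) (1 : Z →L[𝕜] Z) = 1 := rfl

lemma isUnit_prodMapL2 {A : Y →L[𝕜] Y} {B : Z →L[𝕜] Z} (hA : IsUnit A) (hB : IsUnit B) :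
    IsUnit (prodMapL2 A B) := by
  obtain ⟨A, rfl⟩ := hA
  obtain ⟨B, rfl⟩ := hB
  refine ⟨⟨prodMapL2 A B, prodMapL2 ↑A⁻¹ ↑B⁻¹, ?_, ?_⟩, rfl⟩ <;>
    simp [prodMapL2_mul, prodMapL2_one]

lemma isSymmetric_prodMapL2 {A : Y →L[𝕜] Y} {B : Z →L[𝕜] Z} (hA : A.toLinearMap.IsSymmetric)
    (hB : B.toLinearMap.IsSymmetric) : (prodMapL2 A B).toLinearMap.IsSymmetric := fun u v => by
  change ⟪A u.fst, v.fst⟫_𝕜 + ⟪B u.snd, v.snd⟫_𝕜 = ⟪u.fst, A v.fst⟫_𝕜 + ⟪u.snd, B v.snd⟫_𝕜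
  exact congrArg₂ (· + ·) (hA _ _) (hB _ _)

end ContinuousLinearMap

lemma WithLp.norm_fst_le_of_snd_eq_zero {p : ENNReal} [Fact (1 ≤ p)] {Y Z : Type*}
    [SeminormedAddCommGroup Y] [SeminormedAddCommGroup Z] {s z : WithLp p (Y × Z)} {c : ℝ}
    (hc : 0 ≤ c) (hs : s.snd = 0) (hz : ‖z.fst‖ ≤ c * ‖z.snd‖) :
    ‖s.fst‖ ≤ (1 + c) * ‖s - z‖ := by
  have hzsnd : ‖z.snd‖ ≤ ‖s - z‖ := by
    simpa [hs] using WithLp.norm_snd_le (x := s - z)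
  calc ‖s.fst‖ = ‖(s - z).fst + z.fst‖ := by simp
    _ ≤ ‖s - z‖ + c * ‖s - z‖ :=
      norm_add_le_of_le (WithLp.norm_fst_le (x := s - z)) (hz.trans (by gcongr))
    _ = (1 + c) * ‖s - z‖ := by ring

section Krein

variable {X Y Z : Type*} [NormedAddCommGroup X] [InnerProductSpace ℂ X]
  [NormedAddCommGroup Y] [InnerProductSpace ℂ Y] [NormedAddCommGroup Z] [InnerProductSpace ℂ Z]
  (JY : Y →L[ℂ] Y) (JZ : Z →L[ℂ] Z) (T : X →L[ℂ] Y) (V : X →L[ℂ] Z) (ρ : ℝ)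

open ContinuousLinearMap

lemma image_ker_eq_preimage_range :
    T '' (LinearMap.ker (V : X →ₗ[ℂ] Z) : Set X) =
      (fun y => (y, 0)) ⁻¹' Set.range (fun x => (T x, V x)) := by
  ext y
  constructor
  · rintro ⟨x, hx, rfl⟩
    exact ⟨x, Prod.ext rfl hx⟩
  · rintro ⟨x, hx⟩
    exact ⟨x, congrArg Prod.snd hx, congrArg Prod.fst hx⟩

lemma coe_range_prodL2 :
    ((T.prodL2 V).range : Set (WithLp 2 (Y × Z))) =
      WithLp.ofLp ⁻¹' Set.range (fun x => (T x, V x)) := by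
  ext w
  constructor
  · rintro ⟨x, rfl⟩
    exact ⟨x, rfl⟩
  · rintro ⟨x, hx⟩
    exact ⟨x, congrArg (WithLp.toLp 2) hx⟩

lemma re_inner_prodMapL2_prodL2 (x : X) :
    (⟪prodMapL2 JY ((ρ : ℂ) • JZ) (T.prodL2 V x), T.prodL2 V x⟫).re =
      (⟪JY (T x), T x⟫).re + ρ * (⟪JZ (V x), V x⟫).re := by
  rw [inner_prodMapL2_left, smul_apply, inner_smul_left, Complex.conj_ofReal, Complex.add_re,
    Complex.re_ofReal_mul]
  rfl

lemma mem_RLperp_iff {p : Y × Z} :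
    p ∈ RLperp JY JZ T V ρ ↔ WithLp.toLp 2 p ∈
      (((T.prodL2 V).range).map (prodMapL2 JY ((ρ : ℂ) • JZ)).toLinearMap)ᗮ := by
  rw [Submodule.mem_orthogonal_map_iff_s15]
  simp only [LinearMap.mem_range, forall_exists_index, forall_apply_eq_imp_iff]
  refine forall_congr' fun x => ?_
  rw [inner_prodMapL2_left, smul_apply, inner_smul_left, Complex.conj_ofReal]
  rfl

lemma coe_sup_orthogonal_map_range_prodL2 :
    (((T.prodL2 V).range ⊔
        (((T.prodL2 V).range).map (prodMapL2 JY ((ρ : ℂ) • JZ)).toLinearMap)ᗮ :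
        Submodule ℂ (WithLp 2 (Y × Z))) : Set (WithLp 2 (Y × Z))) =
      WithLp.ofLp ⁻¹' (Set.range (fun x => (T x, V x)) + RLperp JY JZ T V ρ) := by
  ext w
  simp only [SetLike.mem_coe, Submodule.mem_sup, Set.mem_preimage, Set.mem_add]
  constructor
  · rintro ⟨_, ⟨x, rfl⟩, v, hv, rfl⟩
    exact ⟨(T x, V x), ⟨x, rfl⟩, v.ofLp, (mem_RLperp_iff JY JZ T V ρ).2 hv, rfl⟩
  · rintro ⟨_, ⟨x, rfl⟩, p, hp, hw⟩
    exact ⟨T.prodL2 V x, ⟨x, rfl⟩, WithLp.toLp 2 p, (mem_RLperp_iff JY JZ T V ρ).1 hp,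
      congrArg (WithLp.toLp 2) hw⟩

lemma exists_norm_fst_le_of_mem_RLperp [CompleteSpace X] [CompleteSpace Y]
    (hJY2 : JY ∘L JY = 1) (hT : Function.Surjective T) :
    ∃ c, 0 ≤ c ∧ ∀ p ∈ RLperp JY JZ T V ρ, ‖p.1‖ ≤ c * ‖p.2‖ := by
  obtain ⟨C, hC, hpre⟩ := T.exists_preimage_norm_le hT
  refine ⟨|ρ| * ‖JZ‖ * ‖V‖ * C * ‖JY‖, by positivity, fun p hp => ?_⟩
  obtain ⟨x, hx, hxnorm⟩ := hpre (JY p.1)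
  have hsq : ‖p.1‖ ^ 2 = ‖(ρ : ℂ) * ⟪JZ (V x), p.2⟫‖ := by
    have h := hp x
    rw [hx, ← comp_apply, hJY2, one_apply_eq_self, add_eq_zero_iff_eq_neg,
      inner_self_eq_norm_sq_to_K] at h
    rw [← norm_neg ((ρ : ℂ) * _), ← h, norm_pow, RCLike.norm_ofReal, abs_norm]
  have hx' : ‖x‖ ≤ C * (‖JY‖ * ‖p.1‖) := hxnorm.trans (by gcongr; exact JY.le_opNorm _)
  have hJZVx := JZ.le_opNorm_of_le (V.le_opNorm_of_le hx')
  have key : ‖p.1‖ * ‖p.1‖ ≤ (|ρ| * ‖JZ‖ * ‖V‖ * C * ‖JY‖ * ‖p.2‖) * ‖p.1‖ :=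
    calc ‖p.1‖ * ‖p.1‖ = |ρ| * ‖⟪JZ (V x), p.2⟫‖ := by
          rw [← sq, hsq, norm_mul, Complex.norm_real, Real.norm_eq_abs]
      _ ≤ |ρ| * (‖JZ (V x)‖ * ‖p.2‖) := by gcongr; exact norm_inner_le_norm _ _
      _ ≤ |ρ| * (‖JZ‖ * (‖V‖ * (C * (‖JY‖ * ‖p.1‖))) * ‖p.2‖) := by gcongr
      _ = (|ρ| * ‖JZ‖ * ‖V‖ * C * ‖JY‖ * ‖p.2‖) * ‖p.1‖ := by ring
  rcases (norm_nonneg p.1).eq_or_lt with h0 | h0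
  · rw [← h0]
    positivity
  · exact le_of_mul_le_mul_right key h0

lemma isSymmetric_prodMapL2_smul (hJY : JY.toLinearMap.IsSymmetric)
    (hJZ : JZ.toLinearMap.IsSymmetric) : (prodMapL2 JY ((ρ : ℂ) • JZ)).toLinearMap.IsSymmetric :=
  isSymmetric_prodMapL2 hJY (hJZ.smul (Complex.conj_ofReal ρ))

lemma isUnit_prodMapL2_smul (hJY2 : JY ∘L JY = 1) (hJZ2 : JZ ∘L JZ = 1) (hρ : ρ ≠ 0) :
    IsUnit (prodMapL2 JY ((ρ : ℂ) • JZ)) :=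
  isUnit_prodMapL2 ⟨⟨JY, JY, hJY2, hJY2⟩, rfl⟩
    (IsUnit.smul (Units.mk0 (ρ : ℂ) (Complex.ofReal_ne_zero.2 hρ)) ⟨⟨JZ, JZ, hJZ2, hJZ2⟩, rfl⟩)

end Krein

theorem stmt15_general
    (JK : K →L[ℂ] K) (hJKsa : IsSelfAdjoint JK) (hJK2 : JK ∘L JK = 1)
    (JE : E →L[ℂ] E) (hJEsa : IsSelfAdjoint JE) (hJE2 : JE ∘L JE = 1)
    (T : H →L[ℂ] K) (V : H →L[ℂ] E)
    (hT : Function.Surjective T)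
    (ρ : ℝ) (hρ : ρ ≠ 0)
    (hclosedR : IsClosed (Set.range (fun x : H => (T x, V x))))
    (hnn : ∀ x : H, 0 ≤ (⟪JK (T x), T x⟫).re + ρ * (⟪JE (V x), V x⟫).re)
    (hpr : IsClosed (Set.range (fun x : H => (T x, V x)) + RLperp JK JE T V ρ)) :
    IsClosed (T '' (LinearMap.ker (V : H →ₗ[ℂ] E) : Set H)) ∧
    ∃ α : ℝ, 0 < α ∧ ∀ y ∈ T '' (LinearMap.ker (V : H →ₗ[ℂ] E) : Set H),
      α * ‖y‖ ^ 2 ≤ (⟪JK y, y⟫).re := by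
  refine ⟨image_ker_eq_preimage_range T V ▸ hclosedR.preimage (by fun_prop), ?_⟩
  obtain ⟨α, hα, hcoer⟩ := Submodule.exists_pos_mul_norm_sub_sq_le_of_pseudoRegular
    (isSymmetric_prodMapL2_smul JK JE ρ hJKsa.isSymmetric hJEsa.isSymmetric)
    (isUnit_prodMapL2_smul JK JE ρ hJK2 hJE2 hρ)
    (coe_range_prodL2 T V ▸ hclosedR.preimage (WithLp.prod_continuous_ofLp 2 K E))
    (by rintro _ ⟨x, rfl⟩; exact (hnn x).trans_eq (re_inner_prodMapL2_prodL2 JK JE T V ρ x).symm)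
    (coe_sup_orthogonal_map_range_prodL2 JK JE T V ρ ▸
      hpr.preimage (WithLp.prod_continuous_ofLp 2 K E))
  obtain ⟨c, hc, hperp⟩ := exists_norm_fst_le_of_mem_RLperp JK JE T V ρ hJK2 hT
  refine ⟨α / (1 + c) ^ 2, by positivity, ?_⟩
  rintro _ ⟨x, hx, rfl⟩
  obtain ⟨z, ⟨-, hz⟩, hle⟩ := hcoer (T.prodL2 V x) ⟨x, rfl⟩
  have hTx : ‖T x‖ ≤ (1 + c) * ‖T.prodL2 V x - z‖ :=
    WithLp.norm_fst_le_of_snd_eq_zero (s := T.prodL2 V x) hc hx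
      (hperp _ ((mem_RLperp_iff JK JE T V ρ).2 hz))
  rw [RCLike.re_to_complex, re_inner_prodMapL2_prodL2, show V x = 0 from hx, map_zero,
    inner_zero_right, Complex.zero_re, mul_zero, add_zero] at hle
  calc α / (1 + c) ^ 2 * ‖T x‖ ^ 2 ≤ α / (1 + c) ^ 2 * ((1 + c) * ‖T.prodL2 V x - z‖) ^ 2 := by
        gcongr
    _ = α * ‖T.prodL2 V x - z‖ ^ 2 := by field_simp
    _ ≤ (⟪JK (T x), T x⟫).re := hle

theorem stmt15
    (JK : K →L[ℂ] K) (hJKsa : IsSelfAdjoint JK) (hJK2 : JK ∘L JK = 1)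
    (JE : E →L[ℂ] E) (hJEsa : IsSelfAdjoint JE) (hJE2 : JE ∘L JE = 1)
    (T : H →L[ℂ] K) (V : H →L[ℂ] E)
    (hT : Function.Surjective T) (hV : Function.Surjective V)
    (ρ : ℝ) (hρ : ρ ≠ 0)
    (hclosedR : IsClosed (Set.range (fun x : H => (T x, V x))))
    (hnn : ∀ x : H, 0 ≤ (⟪JK (T x), T x⟫).re + ρ * (⟪JE (V x), V x⟫).re)
    (hpr : IsClosed (Set.range (fun x : H => (T x, V x)) + RLperp JK JE T V ρ)) :
    IsClosed (T '' (LinearMap.ker (V : H →ₗ[ℂ] E) : Set H)) ∧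
    ∃ α : ℝ, 0 < α ∧ ∀ y ∈ T '' (LinearMap.ker (V : H →ₗ[ℂ] E) : Set H),
      α * ‖y‖ ^ 2 ≤ (⟪JK y, y⟫).re :=
  stmt15_general JK hJKsa hJK2 JE hJEsa hJE2 T V hT ρ hρ hclosedR hnn hpr
end
end
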